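/- arXiv:math/0210209 — 5 statements merged into one kernel-verified Lean document; each statement's English description precedes it below -/
import Mathlib

section
/- Fix m ≥ 1. The ideals occurring in the classification of colength-m ideals of R are pairwise distinct: if I^m_i(a) = I^m_{i'}(a') (with 1 ≤ i, i' ≤ m−1 and a, a' ∈ ℂ nonzero) then i = i' and a = a'; if Q^m_i = Q^m_{i'} (with 1 ≤ i, i' ≤ m) then i = i'; and no ideal I^m_i(a) is equal to any ideal Q^m_{i'}. -/
noncomputable section

open MvPolynomial

/-- The polynomial ring `ℂ[x,y]`. -/
abbrev Pc : Type := MvPolynomial (Fin 2) ℂ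

/-- The ideal `(xy)` of `ℂ[x,y]`. -/
def nodeIdeal : Ideal Pc := Ideal.span {X 0 * X 1}

/-- The affine coordinate ring `ℂ[x,y]/(xy)` of the node. -/
abbrev Anode : Type := Pc ⧸ nodeIdeal

/-- The class of `x` in `ℂ[x,y]/(xy)`. -/
def xA : Anode := Ideal.Quotient.mk nodeIdeal (X 0)

/-- The class of `y` in `ℂ[x,y]/(xy)`. -/
def yA : Anode := Ideal.Quotient.mk nodeIdeal (X 1)

/-- The maximal ideal `(x,y)` of `ℂ[x,y]/(xy)`. -/
def mA : Ideal Anode := Ideal.span {xA, yA}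

/-- Evaluation of polynomials at the origin. -/
def evalO : Pc →+* ℂ := (aeval (fun _ => (0:ℂ)) : Pc →ₐ[ℂ] ℂ).toRingHom

lemma node_le_ker : nodeIdeal ≤ RingHom.ker evalO := by
  rw [nodeIdeal, Ideal.span_le, Set.singleton_subset_iff]
  simp [evalO, RingHom.mem_ker]

/-- Evaluation at the origin, descended to `ℂ[x,y]/(xy)`. -/
def εA : Anode →+* ℂ := Ideal.Quotient.lift nodeIdeal evalO node_le_ker

lemma sub_const_mem (p : Pc) :
    p - C (constantCoeff p) ∈ (Ideal.span {(X 0 : Pc), X 1}) := by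
  induction p using MvPolynomial.induction_on with
  | C a => simp
  | add p q hp hq =>
      have : p + q - C (constantCoeff (p + q)) =
          (p - C (constantCoeff p)) + (q - C (constantCoeff q)) := by
        rw [map_add, map_add]; ring
      rw [this]; exact Ideal.add_mem _ hp hq
  | mul_X p i hp =>
      have h0 : constantCoeff (p * X i) = 0 := by
        rw [map_mul, constantCoeff_X, mul_zero]
      rw [h0, map_zero, sub_zero]
      refine Ideal.mul_mem_left _ p (Ideal.subset_span ?_)
      fin_cases i <;> simp

lemma mA_eq_ker : mA = RingHom.ker εA := by
  apply le_antisymm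
  · rw [mA, Ideal.span_le]
    rintro z hz
    simp only [Set.mem_insert_iff, Set.mem_singleton_iff] at hz
    rcases hz with rfl | rfl <;>
      simp [RingHom.mem_ker, xA, yA, εA, evalO, Ideal.Quotient.lift_mk]
  · intro z hz
    obtain ⟨p, rfl⟩ := Ideal.Quotient.mk_surjective z
    have hev : constantCoeff p = 0 := by
      have : εA (Ideal.Quotient.mk nodeIdeal p) = evalO p := rfl
      rw [RingHom.mem_ker, this] at hz
      simpa [evalO] using hz
    have hp : p ∈ (Ideal.span {(X 0 : Pc), X 1}) := by
      have := sub_const_mem p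
      rwa [hev, map_zero, sub_zero] at this
    have : Ideal.Quotient.mk nodeIdeal p ∈
        Ideal.map (Ideal.Quotient.mk nodeIdeal) (Ideal.span {(X 0 : Pc), X 1}) :=
      Ideal.mem_map_of_mem _ hp
    rwa [Ideal.map_span, Set.image_insert_eq, Set.image_singleton] at this

instance : mA.IsPrime := mA_eq_ker ▸ RingHom.ker_isPrime εA

/-- `R`, the localization of `ℂ[x,y]/(xy)` at the maximal ideal `(x,y)`. -/
abbrev Rnode : Type := Localization.AtPrime mA

/-- The element `x` of `R`. -/
def x : Rnode := algebraMap Anode Rnode xA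

/-- The element `y` of `R`. -/
def y : Rnode := algebraMap Anode Rnode yA

instance : Algebra ℂ Rnode :=
  ((algebraMap Anode Rnode).comp (algebraMap ℂ Anode)).toAlgebra

/-!
Restricting to the two branches of the node gives ring maps `R → ℂ⟦t⟧`: `x ↦ t, y ↦ 0` and
`x ↦ 0, y ↦ t`. Every ideal of the classification maps to a power of `(t)` on each branch, and
these exponents already separate the ideals, except that `I^m_i(a)` and `I^m_i(a')` differ only
in the scalar. For those, a generator quotient `r` with `y^i + a x^(m-i) = (y^i + a' x^(m-i)) r`
is `1` on the `y`-branch, while on the `x`-branch `a = a' r`; both branches pass through the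
origin, so evaluating `r` there gives `a = a'`.
-/

lemma Ideal.pow_eq_pow_of_span_singleton_eq {A : Type*} [CommSemiring A] [IsDomain A] {q : A}
    (hq : q ≠ 0) (hq' : ¬IsUnit q) {k l : ℕ}
    (h : Ideal.span {q ^ k} = Ideal.span {q ^ l}) : k = l := by
  have hassoc := Ideal.span_singleton_eq_span_singleton.mp h
  exact le_antisymm ((pow_dvd_pow_iff hq hq').mp hassoc.dvd)
    ((pow_dvd_pow_iff hq hq').mp hassoc.symm.dvd)

lemma PowerSeries.not_isUnit_X {K : Type*} [Ring K] [Nontrivial K] :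
    ¬IsUnit (PowerSeries.X : PowerSeries K) := by
  simp [PowerSeries.isUnit_iff_constantCoeff]

lemma PowerSeries.pow_eq_pow_of_span_X_pow_eq {K : Type*} [CommRing K] [IsDomain K] {k l : ℕ}
    (h : Ideal.span {(PowerSeries.X : PowerSeries K) ^ k} = Ideal.span {PowerSeries.X ^ l}) :
    k = l :=
  Ideal.pow_eq_pow_of_span_singleton_eq PowerSeries.X_ne_zero PowerSeries.not_isUnit_X h

lemma PowerSeries.eq_of_map_eq_span_X_pow {A K : Type*} [CommSemiring A] [CommRing K]
    [IsDomain K] (φ : A →+* PowerSeries K) {I J : Ideal A} {k l : ℕ}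
    (hI : I.map φ = Ideal.span {PowerSeries.X ^ k})
    (hJ : J.map φ = Ideal.span {PowerSeries.X ^ l})
    (h : I = J) : k = l :=
  PowerSeries.pow_eq_pow_of_span_X_pow_eq (hI ▸ hJ ▸ congrArg (Ideal.map φ) h)

-- The `•` in the statement is the localization's own `ℂ`-action, not that of
-- `instAlgebraComplexRnode`, so `Algebra.smul_def` does not apply directly.
lemma smul_eq_algebraMap_mul (a : ℂ) (r : Rnode) :
    a • r = algebraMap Anode Rnode (algebraMap ℂ Anode a) * r := by
  rw [← IsScalarTower.algebraMap_smul Anode a r, ← smul_eq_mul,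
    ← IsScalarTower.algebraMap_smul Rnode]

section Branch

variable (v : Fin 2 → PowerSeries ℂ) (hv : v 0 * v 1 = 0)
  (hv₀ : ∀ i, PowerSeries.constantCoeff (v i) = 0)

include hv in
lemma nodeIdeal_le_ker_aeval : nodeIdeal ≤ RingHom.ker (aeval v).toRingHom := by
  rw [nodeIdeal, Ideal.span_le, Set.singleton_subset_iff]
  simp [RingHom.mem_ker, hv]

def nodeToPowerSeries : Anode →+* PowerSeries ℂ :=
  Ideal.Quotient.lift nodeIdeal (aeval v).toRingHom fun _ hp => nodeIdeal_le_ker_aeval v hv hp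

include hv₀ in
lemma constantCoeff_comp_nodeToPowerSeries :
    PowerSeries.constantCoeff.comp (nodeToPowerSeries v hv) = εA := by
  refine Ideal.Quotient.ringHom_ext (MvPolynomial.ringHom_ext (fun a => ?_) (fun i => ?_))
  · simp [nodeToPowerSeries, εA, evalO]
  · simp [nodeToPowerSeries, εA, evalO, hv₀]

include hv₀ in
lemma isUnit_nodeToPowerSeries (s : mA.primeCompl) : IsUnit (nodeToPowerSeries v hv s) := by
  rw [PowerSeries.isUnit_iff_constantCoeff, ← RingHom.comp_apply,
    constantCoeff_comp_nodeToPowerSeries v hv hv₀, isUnit_iff_ne_zero]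
  exact fun h => s.2 (mA_eq_ker.ge h)

def branch : Rnode →+* PowerSeries ℂ :=
  IsLocalization.lift (M := mA.primeCompl) (isUnit_nodeToPowerSeries v hv hv₀)

lemma branch_algebraMap (z : Anode) :
    branch v hv hv₀ (algebraMap Anode Rnode z) = nodeToPowerSeries v hv z :=
  IsLocalization.lift_eq _ z

lemma branch_x : branch v hv hv₀ x = v 0 := by
  simp [x, xA, branch_algebraMap, nodeToPowerSeries]

lemma branch_y : branch v hv hv₀ y = v 1 := by
  simp [y, yA, branch_algebraMap, nodeToPowerSeries]

lemma branch_smul (a : ℂ) (r : Rnode) :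
    branch v hv hv₀ (a • r) = PowerSeries.C a * branch v hv hv₀ r := by
  rw [smul_eq_algebraMap_mul, map_mul, branch_algebraMap, ← Ideal.Quotient.mk_algebraMap]
  simp [nodeToPowerSeries]

lemma constantCoeff_comp_branch (w : Fin 2 → PowerSeries ℂ) (hw : w 0 * w 1 = 0)
    (hw₀ : ∀ i, PowerSeries.constantCoeff (w i) = 0) :
    PowerSeries.constantCoeff.comp (branch v hv hv₀) =
      PowerSeries.constantCoeff.comp (branch w hw hw₀) := by
  refine IsLocalization.ringHom_ext mA.primeCompl (RingHom.ext fun z => ?_)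
  simp only [RingHom.comp_apply, branch_algebraMap]
  rw [← RingHom.comp_apply, constantCoeff_comp_nodeToPowerSeries v hv hv₀,
    ← RingHom.comp_apply, constantCoeff_comp_nodeToPowerSeries w hw hw₀]

end Branch

def branchX : Rnode →+* PowerSeries ℂ :=
  branch ![PowerSeries.X, 0] (by simp) (by simp [Fin.forall_fin_two])

def branchY : Rnode →+* PowerSeries ℂ :=
  branch ![0, PowerSeries.X] (by simp) (by simp [Fin.forall_fin_two])

@[simp] lemma branchX_x : branchX x = PowerSeries.X := branch_x ..
@[simp] lemma branchX_y : branchX y = 0 := branch_y ..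
@[simp] lemma branchY_x : branchY x = 0 := branch_x ..
@[simp] lemma branchY_y : branchY y = PowerSeries.X := branch_y ..
@[simp] lemma branchX_smul (a : ℂ) (r : Rnode) :
    branchX (a • r) = PowerSeries.C a * branchX r := branch_smul ..
@[simp] lemma branchY_smul (a : ℂ) (r : Rnode) :
    branchY (a • r) = PowerSeries.C a * branchY r := branch_smul ..

lemma constantCoeff_branchX_eq_constantCoeff_branchY (r : Rnode) :
    PowerSeries.constantCoeff (branchX r) = PowerSeries.constantCoeff (branchY r) :=
  RingHom.congr_fun (constantCoeff_comp_branch _ _ (by simp [Fin.forall_fin_two]) _ _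
    (by simp [Fin.forall_fin_two])) r

section

variable {i k : ℕ}

lemma map_branchY_span_y_pow_add_smul_x_pow (hk : k ≠ 0) (a : ℂ) :
    (Ideal.span {y ^ i + a • x ^ k}).map branchY = Ideal.span {PowerSeries.X ^ i} := by
  simp [Ideal.map_span, hk]

lemma map_branchX_span_y_pow_add_smul_x_pow (hi : i ≠ 0) {a : ℂ} (ha : a ≠ 0) :
    (Ideal.span {y ^ i + a • x ^ k}).map branchX = Ideal.span {PowerSeries.X ^ k} := by
  simpa [Ideal.map_span, hi] using Ideal.span_singleton_mul_left_unit
    (ha.isUnit.map PowerSeries.C) (PowerSeries.X ^ k)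

lemma map_branchY_span_x_pow_y_pow (hk : k ≠ 0) :
    (Ideal.span {x ^ k, y ^ i}).map branchY = Ideal.span {PowerSeries.X ^ i} := by
  simp [Ideal.map_span, Set.image_insert_eq, hk]

lemma map_branchX_span_x_pow_y_pow (hi : i ≠ 0) :
    (Ideal.span {x ^ k, y ^ i}).map branchX = Ideal.span {PowerSeries.X ^ k} := by
  simp [Ideal.map_span, Set.image_insert_eq, hi]

lemma eq_of_span_y_pow_add_smul_x_pow_eq (hi : i ≠ 0) (hk : k ≠ 0) {a a' : ℂ}
    (h : Ideal.span {y ^ i + a • x ^ k} = Ideal.span {y ^ i + a' • x ^ k}) : a = a' := by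
  obtain ⟨r, hr⟩ := Ideal.mem_span_singleton.mp (h ▸ Ideal.mem_span_singleton_self _)
  have hY : branchY r = 1 := by simpa [hk] using congrArg branchY hr
  have hX : PowerSeries.C a = PowerSeries.C a' * branchX r := by
    simpa [hi, mul_right_comm _ (PowerSeries.X ^ k)] using congrArg branchX hr
  simpa [constantCoeff_branchX_eq_constantCoeff_branchY, hY] using
    congrArg PowerSeries.constantCoeff hX

end

theorem classification_ideals_pairwise_distinct_general (m : ℕ) :
    (∀ i i' : ℕ, ∀ a a' : ℂ, 1 ≤ i → i ≤ m - 1 → 1 ≤ i' → i' ≤ m - 1 → a ≠ 0 → a' ≠ 0 →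
      Ideal.span {y ^ i + a • x ^ (m - i)} = Ideal.span {y ^ i' + a' • x ^ (m - i')} →
      i = i' ∧ a = a') ∧
    (∀ i i' : ℕ, 1 ≤ i → i ≤ m → 1 ≤ i' → i' ≤ m →
      (Ideal.span {x ^ (m - i + 1), y ^ i} : Ideal Rnode) =
        Ideal.span {x ^ (m - i' + 1), y ^ i'} →
      i = i') ∧
    (∀ i i' : ℕ, ∀ a : ℂ, 1 ≤ i → i ≤ m - 1 → a ≠ 0 → 1 ≤ i' → i' ≤ m →
      (Ideal.span {y ^ i + a • x ^ (m - i)} : Ideal Rnode) ≠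
        Ideal.span {x ^ (m - i' + 1), y ^ i'}) := by
  refine ⟨fun i i' a a' hi him hi' him' _ _ h => ?_, fun i i' _ _ _ _ h => ?_,
    fun i i' a hi him ha hi' _ h => ?_⟩
  · obtain rfl : i = i' := PowerSeries.eq_of_map_eq_span_X_pow branchY
      (map_branchY_span_y_pow_add_smul_x_pow (by omega) a)
      (map_branchY_span_y_pow_add_smul_x_pow (by omega) a') h
    exact ⟨rfl, eq_of_span_y_pow_add_smul_x_pow_eq (by omega) (by omega) h⟩
  · exact PowerSeries.eq_of_map_eq_span_X_pow branchY
      (map_branchY_span_x_pow_y_pow (Nat.succ_ne_zero _))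
      (map_branchY_span_x_pow_y_pow (Nat.succ_ne_zero _)) h
  · have hy := PowerSeries.eq_of_map_eq_span_X_pow branchY
      (map_branchY_span_y_pow_add_smul_x_pow (by omega) a)
      (map_branchY_span_x_pow_y_pow (Nat.succ_ne_zero _)) h
    have hx := PowerSeries.eq_of_map_eq_span_X_pow branchX
      (map_branchX_span_y_pow_add_smul_x_pow (by omega) ha)
      (map_branchX_span_x_pow_y_pow (by omega)) h
    omega

theorem classification_ideals_pairwise_distinct (m : ℕ) (hm : 1 ≤ m) :
    (∀ i i' : ℕ, ∀ a a' : ℂ, 1 ≤ i → i ≤ m - 1 → 1 ≤ i' → i' ≤ m - 1 → a ≠ 0 → a' ≠ 0 →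
      Ideal.span {y ^ i + a • x ^ (m - i)} = Ideal.span {y ^ i' + a' • x ^ (m - i')} →
      i = i' ∧ a = a') ∧
    (∀ i i' : ℕ, 1 ≤ i → i ≤ m → 1 ≤ i' → i' ≤ m →
      (Ideal.span {x ^ (m - i + 1), y ^ i} : Ideal Rnode) =
        Ideal.span {x ^ (m - i' + 1), y ^ i'} →
      i = i') ∧
    (∀ i i' : ℕ, ∀ a : ℂ, 1 ≤ i → i ≤ m - 1 → a ≠ 0 → 1 ≤ i' → i' ≤ m →
      (Ideal.span {y ^ i + a • x ^ (m - i)} : Ideal Rnode) ≠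
        Ideal.span {x ^ (m - i' + 1), y ^ i'}) :=
  classification_ideals_pairwise_distinct_general m

end
end

section
/- Let m ≥ 2, 1 ≤ i ≤ m−1 and a ∈ ℂ with a ≠ 0. Then the unique ideal J of R with I^m_i(a) ⊆ J and dim_ℂ(R/J) = m−1 is Q^{m−1}_i = (x^{m−i}, y^i). -/
noncomputable section

open MvPolynomial

instance : CommRing Rnode := inferInstance

instance (I : Ideal Rnode) : Algebra ℂ (Rnode ⧸ I) := Ideal.Quotient.algebra ℂ

/-!
Write `n = m - i` and `g = y^i + a x^n`. Since `x g = a x^(n+1)` and `y g = y^(i+1)`, the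
elements `x` and `y` are nilpotent modulo every ideal `J ⊇ (g)`. Hence every `s ∉ (x, y)` has an
inverse modulo `J` coming from `ℂ[x,y]/(xy)`, so `R/J` is a quotient of `ℂ[x,y]` and is spanned
by the classes of `p(x) + y q(y)` with `p, q ∈ ℂ[t]`.

In `R/(x^n, y^i)` these elements with `deg p < n` and `deg q < i - 1` form a basis; independence is
tested in `ℂ[t]/(t^n)` and `ℂ[t]/(t^i)`, where one of `x`, `y` acts as `t` and the other as `0`.
So `(x^n, y^i)` has colength `n + i - 1`.

If `x^n ∉ J`, then `x^n ≠ 0` and `y^i = -a x^n ≠ 0` in `R/J`. In a relation `p(x) + y q(y) = 0`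
with `deg p < n` and `deg q < i`, multiplying by `x` gives `x p(x) = 0`, so `p = 0` because
`x^n ≠ 0 = x^(n+1)`; then `q = 0` because `y^i ≠ 0 = y^(i+1)`. So `R/J` has dimension at least
`n + i`: colength `n + i - 1` forces `(x^n, y^i) ⊆ J`, and equal colengths make it an equality.
-/

open Polynomial

section LocalizationAtMaximal

variable {A B : Type*} [CommRing A] [CommRing B] {P : Ideal A} [P.IsMaximal]

theorem exists_map_mul_eq_one_of_isNilpotent (f : A →+* B) (hf : ∀ p ∈ P, IsNilpotent (f p))
    {s : A} (hs : s ∉ P) : ∃ t, f (t * s) = 1 := by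
  obtain ⟨t, p, hp, hts⟩ := Ideal.IsMaximal.exists_inv ‹_› hs
  obtain ⟨N, hN⟩ := hf p hp
  -- `t * s = 1 - p` with `f p` nilpotent is inverted by the geometric series in `p`.
  refine ⟨(∑ k ∈ Finset.range N, p ^ k) * t, ?_⟩
  rw [mul_assoc, map_mul, eq_sub_of_add_eq hts, map_sum, map_sub, map_one]
  simp only [map_pow]
  rw [geom_sum_mul_neg, hN, sub_zero]

theorem surjective_quotient_comp_algebraMap {L : Type*} [CommRing L] [Algebra A L]
    [IsLocalization.AtPrime L P] (J : Ideal L)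
    (hJ : ∀ p ∈ P, IsNilpotent (Ideal.Quotient.mk J (algebraMap A L p))) :
    Function.Surjective ((Ideal.Quotient.mk J).comp (algebraMap A L)) := by
  intro z
  obtain ⟨z, rfl⟩ := Ideal.Quotient.mk_surjective z
  obtain ⟨⟨r, s⟩, rfl⟩ := IsLocalization.mk'_surjective P.primeCompl z
  obtain ⟨t, ht⟩ :=
    exists_map_mul_eq_one_of_isNilpotent ((Ideal.Quotient.mk J).comp (algebraMap A L)) hJ s.2
  refine ⟨r * t, ?_⟩
  simp only [RingHom.comp_apply, map_mul] at ht ⊢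
  rw [← IsLocalization.mk'_spec L r s, map_mul, mul_assoc,
    mul_comm (Ideal.Quotient.mk J (algebraMap A L s)), ht, mul_one]

end LocalizationAtMaximal

theorem Ideal.eq_of_le_of_finrank_quotient_eq {K A : Type*} [Field K] [CommRing A] [Module K A]
    [IsScalarTower K A A] {I J : Ideal A} (h : I ≤ J) [FiniteDimensional K (A ⧸ I)]
    (he : Module.finrank K (A ⧸ I) = Module.finrank K (A ⧸ J)) : I = J := by
  let F : (A ⧸ I) →ₗ[K] A ⧸ J :=
    { toFun := Ideal.Quotient.factor h
      map_add' := map_add _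
      map_smul' := fun c z => by
        obtain ⟨r, rfl⟩ := Ideal.Quotient.mk_surjective z
        exact Submodule.Quotient.mk_smul J c r }
  have hF : Function.Surjective F := Ideal.Quotient.factor_surjective h
  have : FiniteDimensional K (A ⧸ J) := Module.Finite.of_surjective F hF
  have hinj := (LinearMap.injective_iff_surjective_of_finrank_eq_finrank he).mpr hF
  refine le_antisymm h fun z hz => ?_
  rw [← Ideal.Quotient.eq_zero_iff_mem] at hz ⊢
  exact hinj (by simpa [F] using hz)

section NodeRelation

variable {K B : Type*} [Field K] [CommRing B] [Algebra K B] {u v : B} {n i : ℕ} {a : K}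

theorem pow_succ_eq_zero_left (huv : u * v = 0) (hrel : v ^ i + a • u ^ n = 0) (ha : a ≠ 0)
    (hi : 1 ≤ i) : u ^ (n + 1) = 0 := by
  obtain ⟨i, rfl⟩ : ∃ i', i = i' + 1 := ⟨i - 1, by omega⟩
  have h : a • u ^ (n + 1) = u * (v ^ (i + 1) + a • u ^ n) - (u * v) * v ^ i := by
    rw [Algebra.smul_def, Algebra.smul_def]; ring
  rw [hrel, huv] at h
  simpa [ha] using h

theorem pow_succ_eq_zero_right (huv : u * v = 0) (hrel : v ^ i + a • u ^ n = 0) (hn : 1 ≤ n) :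
    v ^ (i + 1) = 0 := by
  obtain ⟨n, rfl⟩ : ∃ n', n = n' + 1 := ⟨n - 1, by omega⟩
  have h : v ^ (i + 1) = v * (v ^ i + a • u ^ (n + 1)) - a • (u * v) * u ^ n := by
    rw [Algebra.smul_def, Algebra.smul_def]; ring
  rwa [hrel, huv, mul_zero, smul_zero, zero_mul, sub_zero] at h

end NodeRelation

namespace Polynomial

variable {K B : Type*} [Field K] [CommRing B] [Algebra K B]

section NilpotentOrder

variable {u : B} {m : ℕ}

theorem X_pow_dvd_of_aeval_eq_zero (hm : u ^ m ≠ 0) (hm' : u ^ (m + 1) = 0) {p : K[X]}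
    (hp : aeval u p = 0) : X ^ (m + 1) ∣ p := by
  suffices ∀ k ≤ m + 1, X ^ k ∣ p from this _ le_rfl
  intro k hk
  induction k with
  | zero => simp
  | succ k ih =>
    obtain ⟨r, rfl⟩ := ih (by omega)
    -- Multiplying `u ^ k * r(u) = 0` by `u ^ (m - k)` leaves `r(0) • u ^ m = 0`.
    obtain ⟨s, hs⟩ := X_dvd_sub_C (p := r)
    have hr : aeval u r = algebraMap K B (r.coeff 0) + u * aeval u s := by
      have := congrArg (aeval u) hs
      rw [map_sub, aeval_C, map_mul, aeval_X] at this
      rw [← this, add_sub_cancel]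
    have hkill : u ^ m * aeval u r = 0 := by
      rw [map_mul, map_pow, aeval_X] at hp
      rw [show m = (m - k) + k by omega, pow_add, mul_assoc, hp, mul_zero]
    have hcoeff : r.coeff 0 • u ^ m = 0 := by
      rw [hr, mul_add, ← mul_assoc, ← pow_succ, hm', zero_mul, add_zero,
        ← Algebra.commutes, ← Algebra.smul_def] at hkill
      exact hkill
    rw [pow_succ]
    exact mul_dvd_mul_left _ (X_dvd_iff.mpr ((smul_eq_zero.mp hcoeff).resolve_right hm))

theorem eq_zero_of_mul_aeval_eq_zero (hm : u ^ m ≠ 0) (hm' : u ^ (m + 1) = 0) {p : K[X]}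
    (hp : p ∈ degreeLT K m) (h : u * aeval u p = 0) : p = 0 := by
  have hdvd := X_pow_dvd_of_aeval_eq_zero hm hm' (p := X * p) (by rwa [map_mul, aeval_X])
  rw [pow_succ', mul_dvd_mul_iff_left X_ne_zero] at hdvd
  exact eq_zero_of_dvd_of_degree_lt hdvd (by rwa [degree_X_pow, ← mem_degreeLT])

end NilpotentOrder

section NodeEval

variable (K) (u v : B)

def nodeEval : K[X] × K[X] →ₗ[K] B :=
  (aeval u).toLinearMap.coprod (LinearMap.mulLeft K v ∘ₗ (aeval v).toLinearMap)

def nodeEvalLT (n k : ℕ) : degreeLT K n × degreeLT K k →ₗ[K] B :=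
  nodeEval K u v ∘ₗ (degreeLT K n).subtype.prodMap (degreeLT K k).subtype

variable {K u v}

theorem nodeEval_apply (f : K[X] × K[X]) : nodeEval K u v f = aeval u f.1 + v * aeval v f.2 :=
  rfl

theorem map_nodeEval {B' : Type*} [CommRing B'] [Algebra K B'] (φ : B →ₐ[K] B')
    (f : K[X] × K[X]) : φ (nodeEval K u v f) = nodeEval K (φ u) (φ v) f := by
  simp only [nodeEval_apply, map_add, map_mul, aeval_algHom_apply]

theorem finrank_degreeLT_prod (n k : ℕ) :
    Module.finrank K (degreeLT K n × degreeLT K k) = n + k := by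
  rw [Module.finrank_prod, (degreeLTEquiv K n).finrank_eq, (degreeLTEquiv K k).finrank_eq,
    Module.finrank_fin_fun, Module.finrank_fin_fun]

theorem aeval_mul_of_mul_eq_zero (huv : u * v = 0) (p : K[X]) :
    aeval u p * v = p.eval 0 • v := by
  obtain ⟨s, hs⟩ := X_dvd_sub_C (p := p)
  have := congrArg (aeval u) hs
  rw [map_sub, aeval_C, map_mul, aeval_X, sub_eq_iff_eq_add] at this
  rw [this, add_mul, mul_comm u, mul_assoc, huv, mul_zero, zero_add, Algebra.smul_def,
    coeff_zero_eq_eval_zero]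

theorem mul_nodeEval_left (huv : u * v = 0) (f : K[X] × K[X]) :
    u * nodeEval K u v f = nodeEval K u v (X * f.1, 0) := by
  rw [nodeEval_apply, nodeEval_apply, mul_add, ← mul_assoc, huv, zero_mul, add_zero, map_mul,
    aeval_X, map_zero, mul_zero, add_zero]

theorem mul_nodeEval_right (huv : u * v = 0) (f : K[X] × K[X]) :
    v * nodeEval K u v f = nodeEval K u v (0, C (f.1.eval 0) + X * f.2) := by
  rw [nodeEval_apply, nodeEval_apply, mul_add, mul_comm v (aeval u f.1),
    aeval_mul_of_mul_eq_zero huv, map_zero, zero_add, map_add, map_mul, aeval_C, aeval_X,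
    mul_add, Algebra.smul_def, mul_comm v (algebraMap K B _)]

theorem nodeEval_modByMonic {n k : ℕ} (hu : u ^ n = 0) (hv : v ^ (k + 1) = 0)
    (f : K[X] × K[X]) :
    nodeEval K u v (f.1 %ₘ X ^ n, f.2 %ₘ X ^ k) = nodeEval K u v f := by
  have hq : aeval v f.2 = aeval v (f.2 %ₘ X ^ k) + v ^ k * aeval v (f.2 /ₘ X ^ k) := by
    conv_lhs => rw [← modByMonic_add_div f.2 (X ^ k)]
    rw [map_add, map_mul, map_pow, aeval_X]
  rw [nodeEval_apply, nodeEval_apply,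
    aeval_modByMonic_eq_self_of_root (by rw [map_pow, aeval_X, hu]), hq,
    mul_add, ← mul_assoc, ← pow_succ', hv, zero_mul, add_zero]

theorem nodeEvalLT_surjective {n k : ℕ} (hu : u ^ n = 0) (hv : v ^ (k + 1) = 0)
    (h : Function.Surjective (nodeEval K u v)) :
    Function.Surjective (nodeEvalLT K u v n k) := by
  intro z
  obtain ⟨f, rfl⟩ := h z
  refine ⟨(⟨f.1 %ₘ X ^ n, ?_⟩, ⟨f.2 %ₘ X ^ k, ?_⟩), nodeEval_modByMonic hu hv f⟩ <;>
  · rw [mem_degreeLT, ← degree_X_pow (R := K)]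
    exact degree_modByMonic_lt _ (monic_X_pow _)

theorem nodeEvalLT_injective {n i : ℕ} {a : K} (huv : u * v = 0) (hrel : v ^ i + a • u ^ n = 0)
    (ha : a ≠ 0) (hn : 1 ≤ n) (hi : 1 ≤ i) (hu : u ^ n ≠ 0) :
    Function.Injective (nodeEvalLT K u v n i) := by
  have hv : v ^ i ≠ 0 := fun h => by
    rw [h, zero_add, smul_eq_zero] at hrel
    exact hrel.elim ha hu
  rw [← LinearMap.ker_eq_bot, LinearMap.ker_eq_bot']
  rintro ⟨⟨p, hp⟩, ⟨q, hq⟩⟩ h0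
  change aeval u p + v * aeval v q = 0 at h0
  have hp0 : p = 0 := eq_zero_of_mul_aeval_eq_zero hu (pow_succ_eq_zero_left huv hrel ha hi) hp
    (by linear_combination u * h0 - aeval v q * huv)
  subst hp0
  rw [map_zero, zero_add] at h0
  obtain rfl := eq_zero_of_mul_aeval_eq_zero hv (pow_succ_eq_zero_right huv hrel hn) hq h0
  rfl

theorem pow_eq_zero_of_finrank_lt [FiniteDimensional K B] {n i : ℕ} {a : K} (huv : u * v = 0)
    (hrel : v ^ i + a • u ^ n = 0) (ha : a ≠ 0) (hn : 1 ≤ n) (hi : 1 ≤ i)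
    (h : Module.finrank K B < n + i) : u ^ n = 0 := by
  by_contra hu
  have := LinearMap.finrank_le_finrank_of_injective (nodeEvalLT_injective huv hrel ha hn hi hu)
  rw [finrank_degreeLT_prod] at this
  omega

end NodeEval

end Polynomial

-- The preamble's quotient algebra sits over `RingHom.toAlgebra`, whose scalar action is not
-- definitionally that of `Module ℂ (Rnode ⧸ J)` in the statement. This instance, declared later
-- and hence preferred, sits over Mathlib's localization algebra and agrees with it.
instance Rnode.instAlgebraQuotient (J : Ideal Rnode) : Algebra ℂ (Rnode ⧸ J) :=
  @Ideal.Quotient.algebra ℂ Rnode _ _ OreLocalization.instAlgebra J _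

instance : mA.IsMaximal :=
  mA_eq_ker ▸ RingHom.ker_isMaximal_of_surjective εA fun c =>
    ⟨Ideal.Quotient.mk nodeIdeal (MvPolynomial.C c), by simp [εA, evalO]⟩

theorem x_mul_y : x * y = 0 := by
  rw [x, y, ← map_mul, xA, yA, ← map_mul, Ideal.Quotient.eq_zero_iff_mem.mpr, map_zero]
  exact Ideal.mem_span_singleton_self _

theorem isNilpotent_of_mem_mA {B : Type*} [CommRing B] (f : Anode →+* B)
    (hx : IsNilpotent (f xA)) (hy : IsNilpotent (f yA)) {p : Anode} (hp : p ∈ mA) :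
    IsNilpotent (f p) := by
  have : mA ≤ (nilradical B).comap f := by
    rw [mA, Ideal.span_le, Set.insert_subset_iff, Set.singleton_subset_iff]
    exact ⟨hx, hy⟩
  exact this hp

section Lift

variable {B : Type*} [CommRing B] [Algebra ℂ B] (u v : B) (huv : u * v = 0)

def liftAnode : Anode →ₐ[ℂ] B :=
  Ideal.Quotient.liftₐ nodeIdeal (MvPolynomial.aeval ![u, v]) fun p hp => by
    obtain ⟨r, rfl⟩ := Ideal.mem_span_singleton'.mp hp
    simp [huv]

theorem liftAnode_xA : liftAnode u v huv xA = u :=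
  (Ideal.Quotient.lift_mk _ _ _).trans (MvPolynomial.aeval_X _ _)

theorem liftAnode_yA : liftAnode u v huv yA = v :=
  (Ideal.Quotient.lift_mk _ _ _).trans (MvPolynomial.aeval_X _ _)

def liftRnode (hu : IsNilpotent u) (hv : IsNilpotent v) : Rnode →+* B :=
  IsLocalization.lift (M := mA.primeCompl) (g := (liftAnode u v huv : Anode →+* B)) fun s => by
    obtain ⟨t, ht⟩ := exists_map_mul_eq_one_of_isNilpotent (liftAnode u v huv : Anode →+* B)
      (fun _ => isNilpotent_of_mem_mA _ (by rwa [AlgHom.coe_toRingHom, liftAnode_xA])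
        (by rwa [AlgHom.coe_toRingHom, liftAnode_yA]))
      s.2
    rw [map_mul] at ht
    exact IsUnit.of_mul_eq_one_right _ ht

variable (hu : IsNilpotent u) (hv : IsNilpotent v)

theorem liftRnode_x : liftRnode u v huv hu hv x = u :=
  (IsLocalization.lift_eq _ _).trans (liftAnode_xA u v huv)

theorem liftRnode_y : liftRnode u v huv hu hv y = v :=
  (IsLocalization.lift_eq _ _).trans (liftAnode_yA u v huv)

end Lift

theorem nodeEval_quotient_surjective (J : Ideal Rnode)
    (hx : IsNilpotent (Ideal.Quotient.mk J x)) (hy : IsNilpotent (Ideal.Quotient.mk J y)) :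
    Function.Surjective (nodeEval ℂ (Ideal.Quotient.mk J x) (Ideal.Quotient.mk J y)) := by
  have hxy : Ideal.Quotient.mk J x * Ideal.Quotient.mk J y = 0 := by
    rw [← map_mul, x_mul_y, map_zero]
  let π : Pc →+* Rnode ⧸ J :=
    ((Ideal.Quotient.mk J).comp (algebraMap Anode Rnode)).comp (Ideal.Quotient.mk nodeIdeal)
  have hπ : Function.Surjective π :=
    (surjective_quotient_comp_algebraMap J fun _ =>
      isNilpotent_of_mem_mA ((Ideal.Quotient.mk J).comp (algebraMap Anode Rnode)) hx hy).comp
      Ideal.Quotient.mk_surjective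
  intro z
  obtain ⟨p, rfl⟩ := hπ z
  induction p using MvPolynomial.induction_on with
  | C c => exact ⟨(Polynomial.C c, 0), by simp [nodeEval_apply]; rfl⟩
  | add p q hp hq =>
    obtain ⟨f, hf⟩ := hp
    obtain ⟨g, hg⟩ := hq
    exact ⟨f + g, by rw [map_add, hf, hg, map_add]⟩
  | mul_X p j hp =>
    obtain ⟨f, hf⟩ := hp
    rw [map_mul, ← hf, mul_comm]
    fin_cases j
    · exact ⟨_, (mul_nodeEval_left hxy f).symm⟩
    · exact ⟨_, (mul_nodeEval_right hxy f).symm⟩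

theorem exists_algHom_quotient_span_x_pow_y_pow {B : Type*} [CommRing B] [Algebra ℂ B]
    {u v : B} {n i : ℕ} (huv : u * v = 0) (hu : u ^ n = 0) (hv : v ^ i = 0) :
    ∃ φ : (Rnode ⧸ Ideal.span {x ^ n, y ^ i}) →ₐ[ℂ] B,
      φ (Ideal.Quotient.mk _ x) = u ∧ φ (Ideal.Quotient.mk _ y) = v := by
  let φ := liftRnode u v huv ⟨n, hu⟩ ⟨i, hv⟩
  have hφx : φ x = u := liftRnode_x u v huv _ _
  have hφy : φ y = v := liftRnode_y u v huv _ _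
  have hQ : Ideal.span {x ^ n, y ^ i} ≤ RingHom.ker φ := by
    rw [Ideal.span_le, Set.insert_subset_iff, Set.singleton_subset_iff]
    exact ⟨by rw [SetLike.mem_coe, RingHom.mem_ker, map_pow, hφx, hu],
      by rw [SetLike.mem_coe, RingHom.mem_ker, map_pow, hφy, hv]⟩
  refine ⟨{ Ideal.Quotient.lift _ φ fun r hr => hQ hr with commutes' := fun c => ?_ }, hφx, hφy⟩
  exact (IsLocalization.lift_eq _ _).trans ((liftAnode u v huv).commutes c)

theorem finrank_quotient_span_x_pow_y_pow {n i : ℕ} (hn : 1 ≤ n) (hi : 1 ≤ i) :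
    Module.finrank ℂ (Rnode ⧸ Ideal.span {x ^ n, y ^ i}) = n + i - 1 := by
  set Q := Ideal.span {x ^ n, y ^ i}
  have hxn : Ideal.Quotient.mk Q x ^ n = 0 := by
    rw [← map_pow, Ideal.Quotient.eq_zero_iff_mem]
    exact Ideal.subset_span (by simp)
  have hyi : Ideal.Quotient.mk Q y ^ (i - 1 + 1) = 0 := by
    rw [Nat.sub_add_cancel hi, ← map_pow, Ideal.Quotient.eq_zero_iff_mem]
    exact Ideal.subset_span (by simp)
  have hsurj := nodeEvalLT_surjective hxn hyi (nodeEval_quotient_surjective Q ⟨_, hxn⟩ ⟨_, hyi⟩)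
  have hroot (k : ℕ) : AdjoinRoot.root (Polynomial.X ^ k : ℂ[X]) ^ k = 0 := by
    rw [← AdjoinRoot.mk_X, ← map_pow, AdjoinRoot.mk_self]
  have hinj : Function.Injective
      (nodeEvalLT ℂ (Ideal.Quotient.mk Q x) (Ideal.Quotient.mk Q y) n (i - 1)) := by
    refine (injective_iff_map_eq_zero _).mpr ?_
    rintro ⟨⟨p, hp⟩, ⟨q, hq⟩⟩ h0
    change nodeEval ℂ (Ideal.Quotient.mk Q x) (Ideal.Quotient.mk Q y) (p, q) = 0 at h0
    obtain ⟨φ, hφx, hφy⟩ := exists_algHom_quotient_span_x_pow_y_pow (mul_zero _) (hroot n)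
      (zero_pow (by omega : i ≠ 0))
    have h1 := congrArg φ h0
    rw [map_nodeEval, hφx, hφy, nodeEval_apply, zero_mul, add_zero, AdjoinRoot.aeval_eq,
      map_zero, AdjoinRoot.mk_eq_zero] at h1
    obtain rfl := eq_zero_of_dvd_of_degree_lt h1 (by rwa [degree_X_pow, ← mem_degreeLT])
    obtain ⟨ψ, hψx, hψy⟩ := exists_algHom_quotient_span_x_pow_y_pow (zero_mul _)
      (zero_pow (by omega : n ≠ 0)) (hroot i)
    have h2 := congrArg ψ h0
    rw [map_nodeEval, hψx, hψy, nodeEval_apply, map_zero, zero_add, AdjoinRoot.aeval_eq,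
      ← AdjoinRoot.mk_X, ← map_mul, map_zero, AdjoinRoot.mk_eq_zero, ← Nat.sub_add_cancel hi,
      pow_succ', mul_dvd_mul_iff_left X_ne_zero] at h2
    obtain rfl := eq_zero_of_dvd_of_degree_lt h2 (by rwa [degree_X_pow, ← mem_degreeLT])
    rfl
  rw [← (LinearEquiv.ofBijective _ ⟨hinj, hsurj⟩).finrank_eq, finrank_degreeLT_prod]
  omega

theorem x_pow_mem_of_finrank_lt {n i : ℕ} {a : ℂ} (ha : a ≠ 0) (hn : 1 ≤ n) (hi : 1 ≤ i)
    {J : Ideal Rnode} [FiniteDimensional ℂ (Rnode ⧸ J)] (hg : y ^ i + a • x ^ n ∈ J)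
    (h : Module.finrank ℂ (Rnode ⧸ J) < n + i) : x ^ n ∈ J := by
  have hrel : Ideal.Quotient.mk J (y ^ i + a • x ^ n) = 0 :=
    Ideal.Quotient.eq_zero_iff_mem.mpr hg
  have hsmul : Ideal.Quotient.mk J (a • x ^ n) = a • Ideal.Quotient.mk J (x ^ n) :=
    Submodule.Quotient.mk_smul J a (x ^ n)
  rw [map_add, hsmul, map_pow, map_pow] at hrel
  rw [← Ideal.Quotient.eq_zero_iff_mem, map_pow]
  refine pow_eq_zero_of_finrank_lt ?_ hrel ha hn hi h
  rw [← map_mul, x_mul_y, map_zero]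

set_option synthInstance.maxHeartbeats 1000000 in
theorem unique_colength_sub_one_ideal_containing_I_general (m i : ℕ) (a : ℂ)
    (hi1 : 1 ≤ i) (hi2 : i ≤ m - 1) (ha : a ≠ 0) :
    ∀ J : Ideal Rnode,
      (Ideal.span {y ^ i + a • x ^ (m - i)} ≤ J ∧
        Module.finrank ℂ (Rnode ⧸ J) = m - 1) ↔
      J = Ideal.span {x ^ (m - i), y ^ i} := by
  intro J
  have hn : 1 ≤ m - i := by omega
  have hQ := finrank_quotient_span_x_pow_y_pow hn hi1
  have hgQ : y ^ i + a • x ^ (m - i) ∈ Ideal.span {x ^ (m - i), y ^ i} :=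
    add_mem (Ideal.subset_span (by simp))
      (Submodule.smul_of_tower_mem _ a (Ideal.subset_span (by simp)))
  rw [Ideal.span_singleton_le_iff_mem]
  constructor
  · rintro ⟨hgJ, hJ⟩
    have : FiniteDimensional ℂ (Rnode ⧸ J) := Module.finite_of_finrank_pos (by omega)
    have hxJ := x_pow_mem_of_finrank_lt ha hn hi1 hgJ (by omega)
    have hyJ : y ^ i ∈ J := by
      simpa using sub_mem hgJ (Submodule.smul_of_tower_mem J a hxJ)
    have hQJ : Ideal.span {x ^ (m - i), y ^ i} ≤ J := by
      rw [Ideal.span_le, Set.insert_subset_iff, Set.singleton_subset_iff]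
      exact ⟨hxJ, hyJ⟩
    have : FiniteDimensional ℂ (Rnode ⧸ Ideal.span {x ^ (m - i), y ^ i}) :=
      Module.finite_of_finrank_pos (by omega)
    exact (Ideal.eq_of_le_of_finrank_quotient_eq (K := ℂ) hQJ (by omega)).symm
  · rintro rfl
    exact ⟨hgQ, by omega⟩

set_option synthInstance.maxHeartbeats 1000000 in
theorem unique_colength_sub_one_ideal_containing_I (m i : ℕ) (a : ℂ)
    (hm : 2 ≤ m) (hi1 : 1 ≤ i) (hi2 : i ≤ m - 1) (ha : a ≠ 0) :
    ∀ J : Ideal Rnode,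
      (Ideal.span {y ^ i + a • x ^ (m - i)} ≤ J ∧
        Module.finrank ℂ (Rnode ⧸ J) = m - 1) ↔
      J = Ideal.span {x ^ (m - i), y ^ i} :=
  unique_colength_sub_one_ideal_containing_I_general m i a hi1 hi2 ha

end
end

section
/- Fix m ≥ 3 and 2 ≤ i ≤ m−1, and let b, c ∈ 𝔪_S. Then the S-module S[x,y]/(xy, x^{m+1−i} + b·y^{i−1}, y^i + c·x^{m−i}) is free of rank m if and only if b·c = 0. (This is the local equation of the Hilbert scheme of m points of the node at the point Q^m_i: a normal crossing of two smooth m-dimensional components.) -/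
noncomputable section

open MvPolynomial

instance quotAlg (S : Type) [CommRing S] (I : Ideal (MvPolynomial (Fin 2) S)) :
    Algebra S (MvPolynomial (Fin 2) S ⧸ I) := Ideal.Quotient.algebra S

/-!
Write `m = k + l + 3` and `i = l + 2`, so that the relations read `xy = 0`,
`x^(k+2) = -b y^(l+1)` and `y^(l+2) = -c x^(k+1)`.

If `bc = 0`, the monomials `1, x, …, x^(k+1), y, …, y^(l+1)` form an `S`-basis of the
quotient. They span it, because multiplying one of them by `x` or `y` gives zero, another one
of them, or (by a relation) a multiple of one of them. They are linearly independent, because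
the normal form map, which reduces `x^(k+2)` and `y^(l+2)` by the relations and kills mixed
monomials, is `S`-linear and vanishes on the ideal. This last point is where `bc = 0` is
needed: the normal forms of `y (x^(k+2) + b y^(l+1))` and `x (y^(l+2) + c x^(k+1))` are
`-bc x^(k+1)` and `-bc y^(l+1)`.

Conversely, `bc · x^(k+1) = -b y^(l+2) = y x^(k+2) = 0` in the quotient. Taking the coefficient
of `x^(k+1)` modulo the maximal ideal kills the ideal (here `c ∈ 𝔪` is used), and this sends
`x^(k+1)` to `1`. So in any basis some coordinate of `x^(k+1)` is a unit, and `bc = 0`.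
-/

section QuotientLemmas

variable {R A N : Type*} [CommRing R] [CommRing A] [Algebra R A] [AddCommGroup N] [Module R N]

def Ideal.Quotient.liftLinearMap (I : Ideal A) (φ : A →ₗ[R] N) (h : ∀ a ∈ I, φ a = 0) :
    (A ⧸ I) →ₗ[R] N :=
  (I.restrictScalars R).liftQ φ h ∘ₗ
    (Submodule.Quotient.restrictScalarsEquiv R I).symm.toLinearMap

@[simp]
theorem Ideal.Quotient.liftLinearMap_mk (I : Ideal A) (φ : A →ₗ[R] N) (h : ∀ a ∈ I, φ a = 0)
    (a : A) : Ideal.Quotient.liftLinearMap I φ h (Ideal.Quotient.mk I a) = φ a := rfl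

theorem Submodule.eq_top_of_one_mem_of_mul_mem {s : Set A} (hs : Algebra.adjoin R s = ⊤)
    (P : Submodule R A) (h1 : 1 ∈ P) (hmul : ∀ w ∈ P, ∀ x ∈ s, w * x ∈ P) : P = ⊤ := by
  have key : ∀ a ∈ Algebra.adjoin R s, ∀ w ∈ P, w * a ∈ P := by
    intro a ha
    induction ha using Algebra.adjoin_induction with
    | mem x hx => exact fun w hw => hmul w hw x hx
    | algebraMap r => exact fun w hw => by rw [mul_comm, ← Algebra.smul_def]; exact P.smul_mem r hw
    | add x y _ _ hx hy => exact fun w hw => by rw [mul_add]; exact P.add_mem (hx w hw) (hy w hw)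
    | mul x y _ _ hx hy => exact fun w hw => by rw [← mul_assoc]; exact hy _ (hx w hw)
  refine eq_top_iff.2 fun a _ => ?_
  simpa using key a (hs ▸ Algebra.mem_top) 1 h1

end QuotientLemmas

namespace MvPolynomial

variable {R σ N : Type*} [CommRing R] [AddCommGroup N] [Module R N]

theorem mk_C_mul (I : Ideal (MvPolynomial σ R)) (s : R) (p : MvPolynomial σ R) :
    Ideal.Quotient.mk I (C s * p) = s • Ideal.Quotient.mk I p := by
  rw [← smul_eq_C_mul]
  rfl

theorem adjoin_range_mk_X (I : Ideal (MvPolynomial σ R)) :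
    Algebra.adjoin R (Set.range fun n => Ideal.Quotient.mk I (X n)) = ⊤ := by
  have : (Set.range fun n => Ideal.Quotient.mk I (X n)) =
      Ideal.Quotient.mkₐ R I '' Set.range X := by
    rw [← Set.range_comp]
    rfl
  rw [this, Algebra.adjoin_image, adjoin_range_X, Algebra.map_top, AlgHom.range_eq_top]
  exact Ideal.Quotient.mkₐ_surjective R I

theorem linearMap_eq_zero_of_mem_span (φ : MvPolynomial σ R →ₗ[R] N)
    {G : Set (MvPolynomial σ R)} (hG : ∀ g ∈ G, ∀ d, φ (monomial d 1 * g) = 0)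
    {p : MvPolynomial σ R} (hp : p ∈ Ideal.span G) : φ p = 0 := by
  suffices ∀ q, φ (q * p) = 0 by simpa using this 1
  induction hp using Submodule.span_induction with
  | mem g hg =>
    intro q
    induction q using MvPolynomial.induction_on' with
    | monomial d s =>
      rw [show monomial d s = s • monomial d (1 : R) by rw [smul_monomial, smul_eq_mul, mul_one],
        smul_mul_assoc, map_smul, hG g hg, smul_zero]
    | add q q' hq hq' => rw [add_mul, map_add, hq, hq', add_zero]
  | zero => simp
  | add x y _ _ hx hy => intro q; rw [mul_add, map_add, hx, hy, add_zero]
  | smul a x _ hx => intro q; rw [smul_eq_mul, ← mul_assoc, hx]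

end MvPolynomial

theorem IsLocalRing.eq_zero_of_smul_eq_zero_of_map_ne_zero {R M ι : Type*} [CommRing R]
    [IsLocalRing R] [AddCommGroup M] [Module R M] (β : Module.Basis ι R M)
    (χ : M →ₗ[R] ResidueField R) {z : M} (hz : χ z ≠ 0) {r : R} (hr : r • z = 0) : r = 0 := by
  obtain ⟨j, hj⟩ : ∃ j, IsUnit (β.repr z j) := by
    by_contra! h
    refine hz ?_
    rw [← β.linearCombination_repr z, Finsupp.linearCombination_apply, map_finsuppSum]
    refine Finset.sum_eq_zero fun j _ => ?_
    dsimp only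
    rw [map_smul, Algebra.smul_def, IsLocalRing.ResidueField.algebraMap_eq,
      (IsLocalRing.residue_eq_zero_iff _).2 (h j), zero_mul]
  have : r * β.repr z j = 0 := by simpa using congr($(congrArg β.repr hr) j)
  exact (hj.mul_left_eq_zero).1 this

namespace NodeHilbert

variable {S N : Type*} [CommRing S] [AddCommGroup N] [Module S N] {k l : ℕ} {b c : S}

variable (k l b c) in
/-- The ideal of the theorem for `m = k + l + 3` and `i = l + 2`; this parametrization keeps
truncated subtraction out of the exponents. -/
def nodeIdeal : Ideal (MvPolynomial (Fin 2) S) :=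
  Ideal.span {X 0 * X 1, X 0 ^ (k + 2) + C b * X 1 ^ (l + 1), X 1 ^ (l + 2) + C c * X 0 ^ (k + 1)}

variable (S) in
def exponentMap (f : ℕ → ℕ → N) : MvPolynomial (Fin 2) S →ₗ[S] N :=
  (basisMonomials (Fin 2) S).constr S fun d => f (d 0) (d 1)

theorem exponentMap_monomial (f : ℕ → ℕ → N) (d : Fin 2 →₀ ℕ) (s : S) :
    exponentMap S f (monomial d s) = s • f (d 0) (d 1) := by
  rw [show monomial d s = s • monomial d (1 : S) by rw [smul_monomial, smul_eq_mul, mul_one],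
    map_smul, exponentMap]
  congr 1
  simpa using (basisMonomials (Fin 2) S).constr_basis S (fun d => f (d 0) (d 1)) d

theorem exponentMap_eq_zero_of_mem_nodeIdeal (f : ℕ → ℕ → N)
    (hxy : ∀ a e, f (a + 1) (e + 1) = 0)
    (hx : ∀ a e, f (a + (k + 2)) e + b • f a (e + (l + 1)) = 0)
    (hy : ∀ a e, f a (e + (l + 2)) + c • f (a + (k + 1)) e = 0)
    {p : MvPolynomial (Fin 2) S} (hp : p ∈ nodeIdeal k l b c) : exponentMap S f p = 0 := by
  refine MvPolynomial.linearMap_eq_zero_of_mem_span _ ?_ hp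
  simp only [Set.mem_insert_iff, Set.mem_singleton_iff]
  rintro g (rfl | rfl | rfl) d
  · simpa [X, monomial_mul, exponentMap_monomial] using hxy (d 0) (d 1)
  · simpa [X_pow_eq_monomial, C_mul_monomial, monomial_mul, mul_add, exponentMap_monomial]
      using hx (d 0) (d 1)
  · simpa [X_pow_eq_monomial, C_mul_monomial, monomial_mul, mul_add, exponentMap_monomial]
      using hy (d 0) (d 1)

variable (k l) in
def stdVec (n : ℕ) : Fin (k + l + 3) → S := fun j => if (j : ℕ) = n then 1 else 0

theorem stdVec_eq_single (j : Fin (k + l + 3)) :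
    stdVec k l (j : ℕ) = Pi.single j (1 : S) := by
  funext j'
  simp [stdVec, Pi.single_apply, Fin.ext_iff]

variable (k l b c) in
/-- The coordinates of the normal form of `x^a y^e` in the basis `1, x, …, x^(k+1)`,
`y, …, y^(l+1)`, where `x^a` has index `a` and `y^e` has index `k + 1 + e`. -/
def normalForm (a e : ℕ) : Fin (k + l + 3) → S :=
  if e = 0 then
    if a ≤ k + 1 then stdVec k l a else if a = k + 2 then -b • stdVec k l (k + l + 2) else 0
  else if a = 0 then
    if e ≤ l + 1 then stdVec k l (k + 1 + e) else if e = l + 2 then -c • stdVec k l (k + 1) else 0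
  else 0

theorem normalForm_succ_succ (a e : ℕ) : normalForm k l b c (a + 1) (e + 1) = 0 := by
  simp [normalForm]

theorem normalForm_x_relation (hbc : b * c = 0) (a e : ℕ) :
    normalForm k l b c (a + (k + 2)) e + b • normalForm k l b c a (e + (l + 1)) = 0 := by
  rcases e with _ | _ | e <;> rcases a with _ | a <;> simp +arith [normalForm, smul_smul, hbc]

theorem normalForm_y_relation (hbc : b * c = 0) (a e : ℕ) :
    normalForm k l b c a (e + (l + 2)) + c • normalForm k l b c (a + (k + 1)) e = 0 := by
  rcases a with _ | _ | a <;> rcases e with _ | e <;>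
    simp +arith [normalForm, smul_smul, hbc, mul_comm c b]

variable (k l b c) in
abbrev nodeX : MvPolynomial (Fin 2) S ⧸ nodeIdeal k l b c := Ideal.Quotient.mk _ (X 0)

variable (k l b c) in
abbrev nodeY : MvPolynomial (Fin 2) S ⧸ nodeIdeal k l b c := Ideal.Quotient.mk _ (X 1)

theorem nodeX_mul_nodeY : nodeX k l b c * nodeY k l b c = 0 := by
  rw [← map_mul, Ideal.Quotient.eq_zero_iff_mem]
  exact Ideal.subset_span (by simp)

theorem nodeX_pow : nodeX k l b c ^ (k + 2) = -(b • nodeY k l b c ^ (l + 1)) := by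
  rw [eq_neg_iff_add_eq_zero, ← map_pow, ← map_pow, ← MvPolynomial.mk_C_mul, ← map_add,
    Ideal.Quotient.eq_zero_iff_mem]
  exact Ideal.subset_span (by simp)

theorem nodeY_pow : nodeY k l b c ^ (l + 2) = -(c • nodeX k l b c ^ (k + 1)) := by
  rw [eq_neg_iff_add_eq_zero, ← map_pow, ← map_pow, ← MvPolynomial.mk_C_mul, ← map_add,
    Ideal.Quotient.eq_zero_iff_mem]
  exact Ideal.subset_span (by simp)

theorem smul_nodeX_pow_eq_zero : (b * c) • nodeX k l b c ^ (k + 1) = 0 := by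
  calc (b * c) • nodeX k l b c ^ (k + 1) = -(b • nodeY k l b c ^ (l + 1) * nodeY k l b c) := by
        rw [mul_smul, smul_mul_assoc, ← pow_succ, nodeY_pow, smul_neg, neg_neg]
    _ = nodeX k l b c ^ (k + 1) * (nodeX k l b c * nodeY k l b c) := by
        linear_combination (-nodeY k l b c) * (nodeX_pow (k := k) (l := l) (b := b) (c := c))
    _ = 0 := by rw [nodeX_mul_nodeY, mul_zero]

variable (k l b c) in
def standardMonomial (j : Fin (k + l + 3)) : MvPolynomial (Fin 2) S ⧸ nodeIdeal k l b c :=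
  if (j : ℕ) ≤ k + 1 then nodeX k l b c ^ (j : ℕ) else nodeY k l b c ^ ((j : ℕ) - (k + 1))

theorem nodeX_pow_mem_span {a : ℕ} (ha : a ≤ k + 1) :
    nodeX k l b c ^ a ∈ Submodule.span S (Set.range (standardMonomial k l b c)) := by
  rw [show nodeX k l b c ^ a = standardMonomial k l b c ⟨a, by omega⟩ by
    simp [standardMonomial, ha]]
  exact Submodule.subset_span (Set.mem_range_self _)

theorem nodeY_pow_mem_span {e : ℕ} (he : 1 ≤ e) (he' : e ≤ l + 1) :
    nodeY k l b c ^ e ∈ Submodule.span S (Set.range (standardMonomial k l b c)) := by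
  rw [show nodeY k l b c ^ e = standardMonomial k l b c ⟨k + 1 + e, by omega⟩ by
    simp [standardMonomial, show ¬k + 1 + e ≤ k + 1 by omega]]
  exact Submodule.subset_span (Set.mem_range_self _)

theorem standardMonomial_mul_nodeX_mem (j : Fin (k + l + 3)) :
    standardMonomial k l b c j * nodeX k l b c ∈
      Submodule.span S (Set.range (standardMonomial k l b c)) := by
  rw [standardMonomial]
  split_ifs with hj
  · rw [← pow_succ]
    rcases hj.lt_or_eq with hj | hj
    · exact nodeX_pow_mem_span hj
    · rw [hj, nodeX_pow]
      exact neg_mem (Submodule.smul_mem _ _ (nodeY_pow_mem_span (by omega) le_rfl))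
  · obtain ⟨e, he⟩ : ∃ e, (j : ℕ) - (k + 1) = e + 1 := ⟨(j : ℕ) - (k + 2), by omega⟩
    rw [he, pow_succ, mul_assoc, mul_comm (nodeY k l b c), nodeX_mul_nodeY, mul_zero]
    exact zero_mem _

theorem standardMonomial_mul_nodeY_mem (j : Fin (k + l + 3)) :
    standardMonomial k l b c j * nodeY k l b c ∈
      Submodule.span S (Set.range (standardMonomial k l b c)) := by
  rw [standardMonomial]
  split_ifs with hj
  · rcases Nat.eq_zero_or_pos (j : ℕ) with hj0 | hj0
    · rw [hj0, pow_zero, one_mul, ← pow_one (nodeY k l b c)]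
      exact nodeY_pow_mem_span le_rfl (by omega)
    · obtain ⟨a, ha⟩ : ∃ a, (j : ℕ) = a + 1 := ⟨(j : ℕ) - 1, by omega⟩
      rw [ha, pow_succ, mul_assoc, nodeX_mul_nodeY, mul_zero]
      exact zero_mem _
  · rw [← pow_succ]
    rcases Nat.lt_or_ge ((j : ℕ) - (k + 1)) (l + 1) with he | he
    · exact nodeY_pow_mem_span (by omega) he
    · rw [show (j : ℕ) - (k + 1) + 1 = l + 2 by omega, nodeY_pow]
      exact neg_mem (Submodule.smul_mem _ _ (nodeX_pow_mem_span le_rfl))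

theorem span_standardMonomial :
    Submodule.span S (Set.range (standardMonomial k l b c)) = ⊤ := by
  refine Submodule.eq_top_of_one_mem_of_mul_mem (MvPolynomial.adjoin_range_mk_X _) _
    (by simpa using nodeX_pow_mem_span (b := b) (c := c) (Nat.zero_le (k + 1))) ?_
  rintro w hw _ ⟨n, rfl⟩
  induction hw using Submodule.span_induction with
  | mem w hw =>
    obtain ⟨j, rfl⟩ := hw
    fin_cases n
    · exact standardMonomial_mul_nodeX_mem j
    · exact standardMonomial_mul_nodeY_mem j
  | zero => simp
  | add w w' _ _ hw hw' => rw [add_mul]; exact add_mem hw hw'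
  | smul s w _ hw => rw [smul_mul_assoc]; exact Submodule.smul_mem _ s hw

def normalFormQuotient (hbc : b * c = 0) :
    (MvPolynomial (Fin 2) S ⧸ nodeIdeal k l b c) →ₗ[S] Fin (k + l + 3) → S :=
  Ideal.Quotient.liftLinearMap _ (exponentMap S (normalForm k l b c)) fun _ hp =>
    exponentMap_eq_zero_of_mem_nodeIdeal _ normalForm_succ_succ (normalForm_x_relation hbc)
      (normalForm_y_relation hbc) hp

theorem normalFormQuotient_standardMonomial (hbc : b * c = 0) (j : Fin (k + l + 3)) :
    normalFormQuotient hbc (standardMonomial k l b c j) = Pi.single j 1 := by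
  rw [standardMonomial, ← stdVec_eq_single]
  split_ifs with hj
  · rw [← map_pow, normalFormQuotient, Ideal.Quotient.liftLinearMap_mk, X_pow_eq_monomial,
      exponentMap_monomial, one_smul]
    simp [normalForm, hj]
  · rw [← map_pow, normalFormQuotient, Ideal.Quotient.liftLinearMap_mk, X_pow_eq_monomial,
      exponentMap_monomial, one_smul]
    simp [normalForm, show (j : ℕ) - (k + 1) ≠ 0 by omega,
      show (j : ℕ) ≤ l + 1 + (k + 1) by omega, show k + 1 + ((j : ℕ) - (k + 1)) = j by omega]

def nodeBasis (hbc : b * c = 0) :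
    Module.Basis (Fin (k + l + 3)) S (MvPolynomial (Fin 2) S ⧸ nodeIdeal k l b c) :=
  .mk (LinearIndependent.of_comp (normalFormQuotient hbc) (by
      convert (Pi.basisFun S (Fin (k + l + 3))).linearIndependent
      funext j
      simp [normalFormQuotient_standardMonomial]))
    span_standardMonomial.ge

variable (k) in
def coeffForm [IsLocalRing S] (a e : ℕ) : IsLocalRing.ResidueField S :=
  if a = k + 1 ∧ e = 0 then 1 else 0

theorem mul_eq_zero_of_basis [IsLocalRing S] (hc : c ∈ IsLocalRing.maximalIdeal S) {ι : Type*}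
    (β : Module.Basis ι S (MvPolynomial (Fin 2) S ⧸ nodeIdeal k l b c)) : b * c = 0 := by
  have hc1 : c • (1 : IsLocalRing.ResidueField S) = 0 := by
    rw [Algebra.smul_def, mul_one, IsLocalRing.ResidueField.algebraMap_eq,
      IsLocalRing.residue_eq_zero_iff]
    exact hc
  let χ := Ideal.Quotient.liftLinearMap (nodeIdeal k l b c) (exponentMap S (coeffForm k))
    fun _ hp => exponentMap_eq_zero_of_mem_nodeIdeal _ (by simp [coeffForm])
      (by simp +arith [coeffForm]) (by
        intro a e
        by_cases h : a = 0 ∧ e = 0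
        · simpa [coeffForm, h] using hc1
        · simp +arith [coeffForm, h]) hp
  have hχ : χ (nodeX k l b c ^ (k + 1)) ≠ 0 := by
    rw [← map_pow]
    simp [χ, X_pow_eq_monomial, exponentMap_monomial, coeffForm]
  exact IsLocalRing.eq_zero_of_smul_eq_zero_of_map_ne_zero β χ hχ smul_nodeX_pow_eq_zero

end NodeHilbert

theorem punctual_hilbert_scheme_local_equation_at_Q_general
    (S : Type) [CommRing S] [IsLocalRing S]
    (m i : ℕ) (hi1 : 2 ≤ i) (hi2 : i ≤ m - 1)
    (b c : S) (hc : c ∈ IsLocalRing.maximalIdeal S) :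
    Nonempty (Module.Basis (Fin m) S (MvPolynomial (Fin 2) S ⧸
      (Ideal.span {X 0 * X 1, X 0 ^ (m + 1 - i) + C b * X 1 ^ (i - 1),
        X 1 ^ i + C c * X 0 ^ (m - i)} : Ideal (MvPolynomial (Fin 2) S)))) ↔
    b * c = 0 := by
  obtain ⟨l, rfl⟩ : ∃ l, i = l + 2 := ⟨i - 2, by omega⟩
  obtain ⟨k, rfl⟩ : ∃ k, m = k + l + 3 := ⟨m - l - 3, by omega⟩
  rw [show k + l + 3 + 1 - (l + 2) = k + 2 by omega, show l + 2 - 1 = l + 1 by omega,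
    show k + l + 3 - (l + 2) = k + 1 by omega]
  exact ⟨fun ⟨β⟩ => NodeHilbert.mul_eq_zero_of_basis hc β,
    fun hbc => ⟨NodeHilbert.nodeBasis hbc⟩⟩

set_option maxHeartbeats 1000000 in
set_option synthInstance.maxHeartbeats 1000000 in
/-- for an Artinian local ℂ-algebra `S` with residue field `ℂ`,
`m ≥ 3`, `2 ≤ i ≤ m−1` and `b, c` in the maximal ideal of `S`, the `S`-module
`S[x,y]/(xy, x^{m+1−i} + b·y^{i−1}, yⁱ + c·x^{m−i})` is free of rank `m` iff `b·c = 0`. -/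
theorem punctual_hilbert_scheme_local_equation_at_Q
    (S : Type) [CommRing S] [Algebra ℂ S] [IsArtinianRing S] [IsLocalRing S]
    (hres : Function.Bijective (algebraMap ℂ (IsLocalRing.ResidueField S)))
    (m i : ℕ) (hm : 3 ≤ m) (hi1 : 2 ≤ i) (hi2 : i ≤ m - 1)
    (b c : S) (hb : b ∈ IsLocalRing.maximalIdeal S) (hc : c ∈ IsLocalRing.maximalIdeal S) :
    Nonempty (Module.Basis (Fin m) S (MvPolynomial (Fin 2) S ⧸
      (Ideal.span {X 0 * X 1, X 0 ^ (m + 1 - i) + C b * X 1 ^ (i - 1),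
        X 1 ^ i + C c * X 0 ^ (m - i)} : Ideal (MvPolynomial (Fin 2) S)))) ↔
    b * c = 0 :=
  punctual_hilbert_scheme_local_equation_at_Q_general S m i hi1 hi2 b c hc

end
end

section
/- Fix m ≥ 3 and 2 ≤ i ≤ m−1, and let s, b, c ∈ 𝔪_S. Then the S-module S[x,y]/(xy − s, x^{m+1−i} + b·y^{i−1}, y^i + c·x^{m−i}) is free of rank m if and only if b·c = s. (This is the local equation of the relative Hilbert scheme of m points of the versal family xy = t at the point Q^m_i, showing it is smooth.) -/
/-! Put `p = m - i`, `n = i - 1`, `x = X 0`, `y = X 1`.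

If `b * c = s`, the rewriting rules `xy ↦ s`, `x^(p+1) ↦ -b yⁿ`, `y^(n+1) ↦ -c xᵖ` bring
every monomial to an `S`-combination of the `m` monomials `1, x, …, xᵖ, y, …, yⁿ`. The rules are
compatible precisely because `b * c = s`, so the resulting normal form is a well-defined
`S`-linear map on `S[x,y]` that kills the ideal; it inverts the map from `Sᵐ` to the quotient,
which is therefore free with that monomial basis.

Conversely, `(s - b * c) • yⁿ` lies in the ideal, while the coefficient of `yⁿ` of every
element of the ideal lies in `𝔪_S`. Hence the class of `yⁿ` is not in `𝔪_S • M`, so in a basis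
of `M` it has a unit coordinate, and only `0` annihilates it: `s = b * c`. -/

noncomputable section

open MvPolynomial

theorem Ideal.apply_mem_of_mem_span {A M : Type*} [CommRing A] [AddCommGroup M] (φ : A →+ M)
    (N : AddSubgroup M) {G : Set A} (hG : ∀ g ∈ G, ∀ f, φ (f * g) ∈ N) {z : A}
    (hz : z ∈ Ideal.span G) : φ z ∈ N := by
  suffices ∀ f, φ (f * z) ∈ N by simpa using this 1
  induction hz using Submodule.span_induction with
  | mem g hg => exact hG g hg
  | zero => simp [N.zero_mem]
  | add x y _ _ hx hy => exact fun f => by rw [mul_add, map_add]; exact N.add_mem (hx f) (hy f)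
  | smul a x _ hx => exact fun f => by rw [smul_eq_mul, ← mul_assoc]; exact hx (f * a)

theorem Ideal.Quotient.mk_notMem_smul_top {R A : Type*} [CommRing R] [CommRing A] [Algebra R A]
    {I : Ideal A} {J : Ideal R} (φ : A →ₗ[R] R) (hI : ∀ z ∈ I, φ z ∈ J) {a : A}
    (ha : φ a ∉ J) : Ideal.Quotient.mk I a ∉ J • (⊤ : Submodule R (A ⧸ I)) := by
  intro h
  have hle :
      J • ⊤ ⊔ LinearMap.ker (Ideal.Quotient.mkₐ R I).toLinearMap ≤ Submodule.comap φ J := by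
    refine sup_le (Submodule.smul_le.mpr fun r hr x _ => ?_) fun z hz => hI z ?_
    · rw [Submodule.mem_comap, map_smul, smul_eq_mul]
      exact J.mul_mem_right _ hr
    · simpa [Ideal.Quotient.eq_zero_iff_mem] using hz
  have ha' : a ∈ Submodule.comap (Ideal.Quotient.mkₐ R I).toLinearMap (J • ⊤) := h
  rw [Submodule.comap_smul_top_of_surjective J _ (Ideal.Quotient.mkₐ_surjective R I)] at ha'
  exact ha (hle ha')

theorem Module.Basis.eq_zero_of_smul_eq_zero {R M ι : Type*} [CommRing R] [IsLocalRing R]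
    [AddCommGroup M] [Module R M] (β : Module.Basis ι R M) {v : M}
    (hv : v ∉ IsLocalRing.maximalIdeal R • (⊤ : Submodule R M)) {r : R} (hr : r • v = 0) :
    r = 0 := by
  obtain ⟨k, hk⟩ : ∃ k, IsUnit (β.repr v k) := by
    by_contra! h
    refine hv (β.linearCombination_repr v ▸ Submodule.sum_mem _ fun k _ => ?_)
    exact Submodule.smul_mem_smul ((IsLocalRing.mem_maximalIdeal _).mpr (h k)) trivial
  have : r * β.repr v k = 0 := by simpa using congr(β.repr $hr k)
  exact hk.mul_left_eq_zero.mp this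

theorem MvPolynomial.mk_eq_smul_mk_of_sub_mem {S σ : Type*} [CommRing S]
    {I : Ideal (MvPolynomial σ S)} {f g : MvPolynomial σ S} {r : S} (h : f - C r * g ∈ I) :
    Ideal.Quotient.mk I f = r • Ideal.Quotient.mk I g := by
  rw [← Ideal.Quotient.mkₐ_eq_mk S, ← map_smul, smul_eq_C_mul, Ideal.Quotient.mkₐ_eq_mk,
    Ideal.Quotient.eq]
  exact h

theorem MvPolynomial.coeff_single_mul_X_of_ne {R σ : Type*} [CommSemiring R] {i j : σ}
    (hij : j ≠ i) (f : MvPolynomial σ R) (k : ℕ) : coeff (Finsupp.single i k) (f * X j) = 0 := by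
  rw [X, coeff_mul_monomial', if_neg]
  simp [Finsupp.single_le_iff, hij]

theorem MvPolynomial.coeff_single_mul_X_pow_succ {R σ : Type*} [CommSemiring R] (i : σ)
    (f : MvPolynomial σ R) (k : ℕ) : coeff (Finsupp.single i k) (f * X i ^ (k + 1)) = 0 := by
  rw [X_pow_eq_monomial, coeff_mul_monomial', if_neg]
  simp

theorem MvPolynomial.monomial_one_eq_X_pow_mul_X_pow {R : Type*} [CommSemiring R]
    (u : Fin 2 →₀ ℕ) :
    (monomial u 1 : MvPolynomial (Fin 2) R) = X 0 ^ u 0 * X 1 ^ u 1 := by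
  rw [monomial_eq, C_1, one_mul, Finsupp.prod_fintype _ _ fun _ => pow_zero _, Fin.prod_univ_two]

namespace RelativeHilbertScheme

variable {S : Type*} [CommRing S] (s b c : S) (p n : ℕ)

def idealAtQ : Ideal (MvPolynomial (Fin 2) S) :=
  Ideal.span {X 0 * X 1 - C s, X 0 ^ (p + 1) + C b * X 1 ^ n, X 1 ^ (n + 1) + C c * X 0 ^ p}

theorem C_sub_mul_X_pow_mem_idealAtQ : C (s - b * c) * X 1 ^ n ∈ idealAtQ s b c p n := by
  have : (C (s - b * c) * X 1 ^ n : MvPolynomial (Fin 2) S) = -X 1 ^ n * (X 0 * X 1 - C s)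
      + X 0 * (X 1 ^ (n + 1) + C c * X 0 ^ p) - C c * (X 0 ^ (p + 1) + C b * X 1 ^ n) := by
    simp only [map_sub, map_mul]
    ring
  rw [this]
  refine sub_mem (add_mem ?_ ?_) ?_ <;> exact Ideal.mul_mem_left _ _ (Ideal.subset_span (by simp))

section

variable {s b c p n}

theorem coeff_mem_maximalIdeal_of_mem_idealAtQ [IsLocalRing S]
    (hs : s ∈ IsLocalRing.maximalIdeal S) (hb : b ∈ IsLocalRing.maximalIdeal S)
    (hc : c ∈ IsLocalRing.maximalIdeal S) {z : MvPolynomial (Fin 2) S}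
    (hz : z ∈ idealAtQ s b c p n) :
    coeff (Finsupp.single 1 n) z ∈ IsLocalRing.maximalIdeal S := by
  refine Ideal.apply_mem_of_mem_span (coeffAddMonoidHom _)
    (IsLocalRing.maximalIdeal S).toAddSubgroup ?_ hz
  simp only [Set.mem_insert_iff, Set.mem_singleton_iff]
  rintro g (rfl | rfl | rfl) f <;>
    simp only [coeffAddMonoidHom_apply, Submodule.mem_toAddSubgroup]
  · rw [show f * (X 0 * X 1 - C s) = f * X 1 * X 0 - C s * f by ring, coeff_sub,
      coeff_single_mul_X_of_ne zero_ne_one, coeff_C_mul, zero_sub, neg_mem_iff]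
    exact Ideal.mul_mem_right _ _ hs
  · rw [show f * (X 0 ^ (p + 1) + C b * X 1 ^ n) = f * X 0 ^ p * X 0 + C b * (f * X 1 ^ n) by
        ring, coeff_add, coeff_single_mul_X_of_ne zero_ne_one, coeff_C_mul, zero_add]
    exact Ideal.mul_mem_right _ _ hb
  · rw [show f * (X 1 ^ (n + 1) + C c * X 0 ^ p) = f * X 1 ^ (n + 1) + C c * (f * X 0 ^ p) by
        ring, coeff_add, coeff_single_mul_X_pow_succ, coeff_C_mul, zero_add]
    exact Ideal.mul_mem_right _ _ hc

theorem mul_eq_of_basis [IsLocalRing S] (hs : s ∈ IsLocalRing.maximalIdeal S)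
    (hb : b ∈ IsLocalRing.maximalIdeal S) (hc : c ∈ IsLocalRing.maximalIdeal S) {ι : Type*}
    (β : Module.Basis ι S (MvPolynomial (Fin 2) S ⧸ idealAtQ s b c p n)) : b * c = s := by
  have hv : (s - b * c) • Ideal.Quotient.mk (idealAtQ s b c p n) (X 1 ^ n) = 0 := by
    rw [← Ideal.Quotient.mkₐ_eq_mk S, ← map_smul, smul_eq_C_mul,
      Ideal.Quotient.mkₐ_eq_mk, Ideal.Quotient.eq_zero_iff_mem]
    exact C_sub_mul_X_pow_mem_idealAtQ s b c p n
  have hv_notMem := Ideal.Quotient.mk_notMem_smul_top (I := idealAtQ s b c p n)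
    (lcoeff S (Finsupp.single 1 n))
    (fun z hz => coeff_mem_maximalIdeal_of_mem_idealAtQ hs hb hc hz)
    (a := X 1 ^ n) (by simp [X_pow_eq_monomial, coeff_monomial])
  exact (sub_eq_zero.mp (β.eq_zero_of_smul_eq_zero hv_notMem hv)).symm

end

/-- Coordinates of `xᵃ yᵈ` modulo `idealAtQ s b c p n`, for `b * c = s`, in the basis
`1, x, …, xᵖ, y, …, yⁿ` (see `basisMonomial`): index `k ≤ p` is `xᵏ`, index `p + d` is `yᵈ`. -/
def normalForm : ℕ → ℕ → (Fin (p + n + 1) → S)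
  | a + 1, d + 1 => (b * c) • normalForm a d
  | a, 0 =>
    if h : a ≤ p then Pi.single ⟨a, by omega⟩ 1 else -b • normalForm (a - (p + 1)) n
  | 0, d + 1 =>
    if h : d < n then Pi.single ⟨p + 1 + d, by omega⟩ 1 else -c • normalForm p (d - n)
termination_by a d => (n + 1) * a + (p + 1) * d
decreasing_by
  · nlinarith
  · nlinarith [Nat.sub_add_cancel (not_le.mp h)]
  · nlinarith [Nat.sub_add_cancel (not_lt.mp h)]

theorem normalForm_succ_succ (a d : ℕ) :
    normalForm b c p n (a + 1) (d + 1) = (b * c) • normalForm b c p n a d := by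
  rw [normalForm]

theorem normalForm_of_le {a : ℕ} (h : a ≤ p) :
    normalForm b c p n a 0 = Pi.single ⟨a, by omega⟩ 1 := by
  rw [normalForm, dif_pos h]

theorem normalForm_of_lt {d : ℕ} (h : d < n) :
    normalForm b c p n 0 (d + 1) = Pi.single ⟨p + 1 + d, by omega⟩ 1 := by
  rw [normalForm, dif_pos h]

theorem normalForm_add_left_zero (a : ℕ) :
    normalForm b c p n (a + p + 1) 0 = -b • normalForm b c p n a n := by
  rw [normalForm, dif_neg (by omega), Nat.add_assoc a p 1, Nat.add_sub_cancel]

theorem normalForm_zero_add_right (d : ℕ) :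
    normalForm b c p n 0 (d + n + 1) = -c • normalForm b c p n p d := by
  rw [normalForm, dif_neg (by omega), Nat.add_sub_cancel]

theorem normalForm_add_left (a d : ℕ) :
    normalForm b c p n (a + p + 1) d = -b • normalForm b c p n a (d + n) := by
  induction d generalizing a with
  | zero => rw [zero_add, normalForm_add_left_zero]
  | succ d ih =>
    cases a with
    | zero =>
      rw [zero_add, normalForm_succ_succ, Nat.add_right_comm d 1 n, normalForm_zero_add_right,
        smul_smul, neg_mul_neg]
    | succ a =>
      rw [Nat.add_right_comm a 1 p, Nat.add_right_comm (a + p) 1 1, normalForm_succ_succ, ih,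
        Nat.add_right_comm d 1 n, normalForm_succ_succ, smul_comm]

theorem normalForm_add_right (a d : ℕ) :
    normalForm b c p n a (d + n + 1) = -c • normalForm b c p n (a + p) d := by
  induction a generalizing d with
  | zero => rw [zero_add, normalForm_zero_add_right]
  | succ a ih =>
    cases d with
    | zero =>
      rw [zero_add, normalForm_succ_succ, Nat.add_right_comm a 1 p, normalForm_add_left_zero,
        smul_smul, neg_mul_neg, mul_comm c]
    | succ d =>
      rw [Nat.add_right_comm d 1 n, Nat.add_right_comm (d + n) 1 1, normalForm_succ_succ, ih,
        Nat.add_right_comm a 1 p, normalForm_succ_succ, smul_comm]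

def basisMonomial (k : Fin (p + n + 1)) : MvPolynomial (Fin 2) S :=
  if (k : ℕ) ≤ p then X 0 ^ (k : ℕ) else X 1 ^ ((k : ℕ) - p)

def normalFormMap : MvPolynomial (Fin 2) S →ₗ[S] (Fin (p + n + 1) → S) :=
  (basisMonomials (Fin 2) S).constr S fun u => normalForm b c p n (u 0) (u 1)

def ofCoords : (Fin (p + n + 1) → S) →ₗ[S] MvPolynomial (Fin 2) S ⧸ idealAtQ s b c p n :=
  (Ideal.Quotient.mkₐ S _).toLinearMap ∘ₗ Fintype.linearCombination S (basisMonomial p n)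

theorem normalFormMap_monomial (u : Fin 2 →₀ ℕ) :
    normalFormMap b c p n (monomial u 1) = normalForm b c p n (u 0) (u 1) :=
  (basisMonomials (Fin 2) S).constr_basis S _ u

theorem normalFormMap_X_pow_mul_X_pow (a d : ℕ) :
    normalFormMap b c p n (X 0 ^ a * X 1 ^ d) = normalForm b c p n a d := by
  rw [X_pow_eq_monomial, X_pow_eq_monomial, monomial_mul, one_mul, normalFormMap_monomial]
  simp

theorem normalFormMap_basisMonomial (k : Fin (p + n + 1)) :
    normalFormMap b c p n (basisMonomial p n k) = Pi.single k 1 := by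
  by_cases hk : (k : ℕ) ≤ p
  · rw [basisMonomial, if_pos hk, ← mul_one (X 0 ^ _), ← pow_zero (X 1),
      normalFormMap_X_pow_mul_X_pow, normalForm_of_le b c p n hk]
  · obtain ⟨d, hd⟩ : ∃ d, (k : ℕ) - p = d + 1 := ⟨k - p - 1, by omega⟩
    rw [basisMonomial, if_neg hk, hd, ← one_mul (X 1 ^ _), ← pow_zero (X 0),
      normalFormMap_X_pow_mul_X_pow, normalForm_of_lt b c p n (by omega)]
    congr 1
    ext
    simp only
    omega

theorem normalFormMap_comp_linearCombination :
    normalFormMap b c p n ∘ₗ Fintype.linearCombination S (basisMonomial p n) = LinearMap.id :=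
  (Pi.basisFun S _).ext fun k => by
    simp [Fintype.linearCombination_apply_single, normalFormMap_basisMonomial]

theorem ofCoords_single (k : Fin (p + n + 1)) :
    ofCoords s b c p n (Pi.single k 1) = Ideal.Quotient.mk _ (basisMonomial p n k) := by
  simp [ofCoords, Fintype.linearCombination_apply_single]

section

variable {s b c p n}

theorem normalFormMap_mul_eq_zero (hbc : b * c = s) {g : MvPolynomial (Fin 2) S}
    (hg : g ∈ ({X 0 * X 1 - C s, X 0 ^ (p + 1) + C b * X 1 ^ n,
      X 1 ^ (n + 1) + C c * X 0 ^ p} : Set (MvPolynomial (Fin 2) S)))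
    (f : MvPolynomial (Fin 2) S) : normalFormMap b c p n (f * g) = 0 := by
  suffices normalFormMap b c p n ∘ₗ LinearMap.mulRight S g = 0 from LinearMap.congr_fun this f
  refine (basisMonomials (Fin 2) S).ext fun u => ?_
  simp only [coe_basisMonomials, LinearMap.comp_apply, LinearMap.mulRight_apply,
    LinearMap.zero_apply, monomial_one_eq_X_pow_mul_X_pow]
  generalize u 0 = a, u 1 = d
  simp only [Set.mem_insert_iff, Set.mem_singleton_iff] at hg
  rcases hg with rfl | rfl | rfl
  · rw [show (X 0 ^ a * X 1 ^ d * (X 0 * X 1 - C s) : MvPolynomial (Fin 2) S) =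
        X 0 ^ (a + 1) * X 1 ^ (d + 1) - s • (X 0 ^ a * X 1 ^ d) by rw [smul_eq_C_mul]; ring,
      map_sub, map_smul, normalFormMap_X_pow_mul_X_pow, normalFormMap_X_pow_mul_X_pow,
      normalForm_succ_succ, hbc, sub_self]
  · rw [show (X 0 ^ a * X 1 ^ d * (X 0 ^ (p + 1) + C b * X 1 ^ n) : MvPolynomial (Fin 2) S) =
        X 0 ^ (a + p + 1) * X 1 ^ d + b • (X 0 ^ a * X 1 ^ (d + n)) by rw [smul_eq_C_mul]; ring,
      map_add, map_smul, normalFormMap_X_pow_mul_X_pow, normalFormMap_X_pow_mul_X_pow,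
      normalForm_add_left, neg_smul, neg_add_cancel]
  · rw [show (X 0 ^ a * X 1 ^ d * (X 1 ^ (n + 1) + C c * X 0 ^ p) : MvPolynomial (Fin 2) S) =
        X 0 ^ a * X 1 ^ (d + n + 1) + c • (X 0 ^ (a + p) * X 1 ^ d) by rw [smul_eq_C_mul]; ring,
      map_add, map_smul, normalFormMap_X_pow_mul_X_pow, normalFormMap_X_pow_mul_X_pow,
      normalForm_add_right, neg_smul, neg_add_cancel]

theorem normalFormMap_eq_zero_of_mem (hbc : b * c = s) {z : MvPolynomial (Fin 2) S}
    (hz : z ∈ idealAtQ s b c p n) : normalFormMap b c p n z = 0 :=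
  Ideal.apply_mem_of_mem_span (normalFormMap b c p n).toAddMonoidHom ⊥
    (fun _ hg f => normalFormMap_mul_eq_zero hbc hg f) hz

theorem mk_X_pow_mul_X_pow (hbc : b * c = s) (a d : ℕ) :
    Ideal.Quotient.mk (idealAtQ s b c p n) (X 0 ^ a * X 1 ^ d) =
      ofCoords s b c p n (normalForm b c p n a d) := by
  induction a, d using normalForm.induct p n with
  | case1 a d ih =>
    rw [normalForm_succ_succ, map_smul, ← ih, hbc]
    apply MvPolynomial.mk_eq_smul_mk_of_sub_mem
    rw [show (X 0 ^ (a + 1) * X 1 ^ (d + 1) - C s * (X 0 ^ a * X 1 ^ d) : MvPolynomial (Fin 2) S)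
      = X 0 ^ a * X 1 ^ d * (X 0 * X 1 - C s) by ring]
    exact Ideal.mul_mem_left _ _ (Ideal.subset_span (by simp))
  | case2 a ha =>
    rw [normalForm_of_le b c p n ha, ofCoords_single, basisMonomial, if_pos ha, pow_zero, mul_one]
  | case3 a ha ih =>
    obtain ⟨a, rfl⟩ : ∃ a', a = a' + p + 1 := ⟨a - (p + 1), by omega⟩
    rw [Nat.add_assoc a p 1, Nat.add_sub_cancel] at ih
    rw [normalForm_add_left_zero, map_smul, ← ih]
    apply MvPolynomial.mk_eq_smul_mk_of_sub_mem
    rw [show (X 0 ^ (a + p + 1) * X 1 ^ 0 - C (-b) * (X 0 ^ a * X 1 ^ n) : MvPolynomial (Fin 2) S)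
      = X 0 ^ a * (X 0 ^ (p + 1) + C b * X 1 ^ n) by rw [map_neg]; ring]
    exact Ideal.mul_mem_left _ _ (Ideal.subset_span (by simp))
  | case4 d hd =>
    rw [normalForm_of_lt b c p n hd, ofCoords_single, basisMonomial, if_neg (by simp; omega),
      show p + 1 + d - p = d + 1 by omega, pow_zero, one_mul]
  | case5 d hd ih =>
    obtain ⟨d, rfl⟩ : ∃ d', d = d' + n := ⟨d - n, by omega⟩
    rw [Nat.add_sub_cancel] at ih
    rw [normalForm_zero_add_right, map_smul, ← ih]
    apply MvPolynomial.mk_eq_smul_mk_of_sub_mem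
    rw [show (X 0 ^ 0 * X 1 ^ (d + n + 1) - C (-c) * (X 0 ^ p * X 1 ^ d) : MvPolynomial (Fin 2) S)
      = X 1 ^ d * (X 1 ^ (n + 1) + C c * X 0 ^ p) by rw [map_neg]; ring]
    exact Ideal.mul_mem_left _ _ (Ideal.subset_span (by simp))

theorem ofCoords_comp_normalFormMap (hbc : b * c = s) :
    ofCoords s b c p n ∘ₗ normalFormMap b c p n =
      (Ideal.Quotient.mkₐ S (idealAtQ s b c p n)).toLinearMap :=
  (basisMonomials (Fin 2) S).ext fun u => by
    rw [LinearMap.comp_apply, coe_basisMonomials, normalFormMap_monomial,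
      ← mk_X_pow_mul_X_pow hbc, ← monomial_one_eq_X_pow_mul_X_pow]
    rfl

theorem ofCoords_bijective (hbc : b * c = s) : Function.Bijective (ofCoords s b c p n) := by
  refine ⟨(injective_iff_map_eq_zero _).mpr fun v hv => ?_, fun y => ?_⟩
  · have hmem : Fintype.linearCombination S (basisMonomial p n) v ∈ idealAtQ s b c p n :=
      Ideal.Quotient.eq_zero_iff_mem.mp hv
    simpa [← LinearMap.comp_apply, normalFormMap_comp_linearCombination] using
      normalFormMap_eq_zero_of_mem hbc hmem
  · obtain ⟨f, rfl⟩ := Ideal.Quotient.mk_surjective y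
    exact ⟨normalFormMap b c p n f, LinearMap.congr_fun (ofCoords_comp_normalFormMap hbc) f⟩

theorem nonempty_basis_iff [IsLocalRing S] (hs : s ∈ IsLocalRing.maximalIdeal S)
    (hb : b ∈ IsLocalRing.maximalIdeal S) (hc : c ∈ IsLocalRing.maximalIdeal S) :
    Nonempty (Module.Basis (Fin (p + n + 1)) S (MvPolynomial (Fin 2) S ⧸ idealAtQ s b c p n)) ↔
      b * c = s :=
  ⟨fun ⟨β⟩ => mul_eq_of_basis hs hb hc β, fun hbc =>
    ⟨(Pi.basisFun S _).map (LinearEquiv.ofBijective _ (ofCoords_bijective hbc))⟩⟩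

end

end RelativeHilbertScheme

open RelativeHilbertScheme in
theorem relative_hilbert_scheme_local_equation_at_Q_general
    (S : Type) [CommRing S] [IsLocalRing S]
    (m i : ℕ) (hi1 : 2 ≤ i) (hi2 : i ≤ m - 1)
    (s b c : S) (hs : s ∈ IsLocalRing.maximalIdeal S)
    (hb : b ∈ IsLocalRing.maximalIdeal S) (hc : c ∈ IsLocalRing.maximalIdeal S) :
    Nonempty (Module.Basis (Fin m) S (MvPolynomial (Fin 2) S ⧸
      (Ideal.span {X 0 * X 1 - C s, X 0 ^ (m + 1 - i) + C b * X 1 ^ (i - 1),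
        X 1 ^ i + C c * X 0 ^ (m - i)} : Ideal (MvPolynomial (Fin 2) S)))) ↔
    b * c = s := by
  obtain ⟨n, rfl⟩ : ∃ n, i = n + 1 := ⟨i - 1, by omega⟩
  obtain ⟨p, rfl⟩ : ∃ p, m = p + n + 1 := ⟨m - (n + 1), by omega⟩
  rw [show p + n + 1 + 1 - (n + 1) = p + 1 by omega, Nat.add_sub_cancel,
    show p + n + 1 - (n + 1) = p by omega]
  exact nonempty_basis_iff hs hb hc

set_option maxHeartbeats 1000000 in
set_option synthInstance.maxHeartbeats 1000000 in
/-- for an Artinian local ℂ-algebra `S` with residue field `ℂ`,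
`m ≥ 3`, `2 ≤ i ≤ m−1` and `s, b, c` in the maximal ideal of `S`, the `S`-module
`S[x,y]/(xy − s, x^{m+1−i} + b·y^{i−1}, yⁱ + c·x^{m−i})` is free of rank `m`
iff `b·c = s`. -/
theorem relative_hilbert_scheme_local_equation_at_Q
    (S : Type) [CommRing S] [Algebra ℂ S] [IsArtinianRing S] [IsLocalRing S]
    (hres : Function.Bijective (algebraMap ℂ (IsLocalRing.ResidueField S)))
    (m i : ℕ) (hm : 3 ≤ m) (hi1 : 2 ≤ i) (hi2 : i ≤ m - 1)
    (s b c : S) (hs : s ∈ IsLocalRing.maximalIdeal S)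
    (hb : b ∈ IsLocalRing.maximalIdeal S) (hc : c ∈ IsLocalRing.maximalIdeal S) :
    Nonempty (Module.Basis (Fin m) S (MvPolynomial (Fin 2) S ⧸
      (Ideal.span {X 0 * X 1 - C s, X 0 ^ (m + 1 - i) + C b * X 1 ^ (i - 1),
        X 1 ^ i + C c * X 0 ^ (m - i)} : Ideal (MvPolynomial (Fin 2) S)))) ↔
    b * c = s :=
  relative_hilbert_scheme_local_equation_at_Q_general S m i hi1 hi2 s b c hs hb hc

end
end

section
/- Let f ∈ ℂ[X, Y] be any polynomial in two variables. Then in the polynomial ring ℂ[x_1, y_1, x_2, y_2], the element x_1·(f(x_1, y_1) − f(x_2, y_2)) lies in the ideal generated by x_1 − x_2 and x_1y_1 − x_2y_2, and the element y_1·(f(x_1, y_1) − f(x_2, y_2)) lies in the ideal generated by y_1 − y_2 and x_1y_1 − x_2y_2. (This is the base case of the divisibility lemma: on pairs of points of a common fiber of the node family xy = t, the difference f(p_1) − f(p_2) is divisible by the local equation x_1 − x_2, respectively y_1 − y_2, of the diagonal in each of the two standard charts.) -/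
open MvPolynomial

private lemma aux1 (f : MvPolynomial (Fin 2) ℂ) :
    (X 0 : MvPolynomial (Fin 4) ℂ) *
        (aeval ![X 0, X 1] f - aeval ![X 2, X 3] f) ∈
      Ideal.span {(X 0 : MvPolynomial (Fin 4) ℂ) - X 2, X 0 * X 1 - X 2 * X 3} := by
  set I := Ideal.span {(X 0 : MvPolynomial (Fin 4) ℂ) - X 2, X 0 * X 1 - X 2 * X 3} with hI
  have hg1 : (X 0 : MvPolynomial (Fin 4) ℂ) - X 2 ∈ I :=
    Ideal.subset_span (by simp)
  have hg2 : (X 0 : MvPolynomial (Fin 4) ℂ) * X 1 - X 2 * X 3 ∈ I :=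
    Ideal.subset_span (by simp)
  induction f using MvPolynomial.induction_on with
  | C a => simp
  | add p q hp hq =>
      have : (X 0 : MvPolynomial (Fin 4) ℂ) *
          (aeval ![X 0, X 1] (p + q) - aeval ![X 2, X 3] (p + q)) =
          X 0 * (aeval ![X 0, X 1] p - aeval ![X 2, X 3] p) +
          X 0 * (aeval ![X 0, X 1] q - aeval ![X 2, X 3] q) := by
        simp [map_add]; ring
      rw [this]; exact I.add_mem hp hq
  | mul_X p n hp =>
      fin_cases n
      · show (X 0 : MvPolynomial (Fin 4) ℂ) *
            (aeval ![X 0, X 1] (p * X 0) - aeval ![X 2, X 3] (p * X 0)) ∈ I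
        have : (X 0 : MvPolynomial (Fin 4) ℂ) *
            (aeval ![X 0, X 1] (p * X 0) - aeval ![X 2, X 3] (p * X 0)) =
            X 0 * (X 0 * (aeval ![X 0, X 1] p - aeval ![X 2, X 3] p)) +
            (X 0 * aeval ![X 2, X 3] p) * (X 0 - X 2) := by
          simp [map_mul, aeval_X]; ring
        rw [this]
        exact I.add_mem (I.mul_mem_left _ hp) (I.mul_mem_left _ hg1)
      · show (X 0 : MvPolynomial (Fin 4) ℂ) *
            (aeval ![X 0, X 1] (p * X 1) - aeval ![X 2, X 3] (p * X 1)) ∈ I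
        have : (X 0 : MvPolynomial (Fin 4) ℂ) *
            (aeval ![X 0, X 1] (p * X 1) - aeval ![X 2, X 3] (p * X 1)) =
            X 1 * (X 0 * (aeval ![X 0, X 1] p - aeval ![X 2, X 3] p)) +
            aeval ![X 2, X 3] p * (X 0 * X 1 - X 2 * X 3) +
            (- aeval ![X 2, X 3] p * X 3) * (X 0 - X 2) := by
          simp [map_mul, aeval_X]; ring
        rw [this]
        exact I.add_mem (I.add_mem (I.mul_mem_left _ hp) (I.mul_mem_left _ hg2))
          (I.mul_mem_left _ hg1)

private lemma aux2 (f : MvPolynomial (Fin 2) ℂ) :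
    (X 1 : MvPolynomial (Fin 4) ℂ) *
        (aeval ![X 0, X 1] f - aeval ![X 2, X 3] f) ∈
      Ideal.span {(X 1 : MvPolynomial (Fin 4) ℂ) - X 3, X 0 * X 1 - X 2 * X 3} := by
  set I := Ideal.span {(X 1 : MvPolynomial (Fin 4) ℂ) - X 3, X 0 * X 1 - X 2 * X 3} with hI
  have hg1 : (X 1 : MvPolynomial (Fin 4) ℂ) - X 3 ∈ I :=
    Ideal.subset_span (by simp)
  have hg2 : (X 0 : MvPolynomial (Fin 4) ℂ) * X 1 - X 2 * X 3 ∈ I :=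
    Ideal.subset_span (by simp)
  induction f using MvPolynomial.induction_on with
  | C a => simp
  | add p q hp hq =>
      have : (X 1 : MvPolynomial (Fin 4) ℂ) *
          (aeval ![X 0, X 1] (p + q) - aeval ![X 2, X 3] (p + q)) =
          X 1 * (aeval ![X 0, X 1] p - aeval ![X 2, X 3] p) +
          X 1 * (aeval ![X 0, X 1] q - aeval ![X 2, X 3] q) := by
        simp [map_add]; ring
      rw [this]; exact I.add_mem hp hq
  | mul_X p n hp =>
      fin_cases n
      · show (X 1 : MvPolynomial (Fin 4) ℂ) *
            (aeval ![X 0, X 1] (p * X 0) - aeval ![X 2, X 3] (p * X 0)) ∈ I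
        have : (X 1 : MvPolynomial (Fin 4) ℂ) *
            (aeval ![X 0, X 1] (p * X 0) - aeval ![X 2, X 3] (p * X 0)) =
            X 0 * (X 1 * (aeval ![X 0, X 1] p - aeval ![X 2, X 3] p)) +
            aeval ![X 2, X 3] p * (X 0 * X 1 - X 2 * X 3) +
            (- aeval ![X 2, X 3] p * X 2) * (X 1 - X 3) := by
          simp [map_mul, aeval_X]; ring
        rw [this]
        exact I.add_mem (I.add_mem (I.mul_mem_left _ hp) (I.mul_mem_left _ hg2))
          (I.mul_mem_left _ hg1)
      · show (X 1 : MvPolynomial (Fin 4) ℂ) *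
            (aeval ![X 0, X 1] (p * X 1) - aeval ![X 2, X 3] (p * X 1)) ∈ I
        have : (X 1 : MvPolynomial (Fin 4) ℂ) *
            (aeval ![X 0, X 1] (p * X 1) - aeval ![X 2, X 3] (p * X 1)) =
            X 1 * (X 1 * (aeval ![X 0, X 1] p - aeval ![X 2, X 3] p)) +
            (X 1 * aeval ![X 2, X 3] p) * (X 1 - X 3) := by
          simp [map_mul, aeval_X]; ring
        rw [this]
        exact I.add_mem (I.mul_mem_left _ hp) (I.mul_mem_left _ hg1)

/-- for any polynomial `f ∈ ℂ[X, Y]`, working in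
`ℂ[x₁, y₁, x₂, y₂]` (with `x₁ = X 0`, `y₁ = X 1`, `x₂ = X 2`, `y₂ = X 3`), the element
`x₁ · (f(x₁,y₁) − f(x₂,y₂))` lies in the ideal `(x₁ − x₂, x₁y₁ − x₂y₂)`, and
`y₁ · (f(x₁,y₁) − f(x₂,y₂))` lies in the ideal `(y₁ − y₂, x₁y₁ − x₂y₂)`. -/
theorem diff_divisible_on_node_pairs (f : MvPolynomial (Fin 2) ℂ) :
    (X 0 : MvPolynomial (Fin 4) ℂ) *
        (aeval ![X 0, X 1] f - aeval ![X 2, X 3] f) ∈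
      Ideal.span {(X 0 : MvPolynomial (Fin 4) ℂ) - X 2, X 0 * X 1 - X 2 * X 3} ∧
    (X 1 : MvPolynomial (Fin 4) ℂ) *
        (aeval ![X 0, X 1] f - aeval ![X 2, X 3] f) ∈
      Ideal.span {(X 1 : MvPolynomial (Fin 4) ℂ) - X 3, X 0 * X 1 - X 2 * X 3} :=
  ⟨aux1 f, aux2 f⟩
end
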